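/- arXiv:1802.07642 — 9 statements merged into one kernel-verified Lean document; each statement's English description precedes it below -/
import Mathlib

section
/- In a Com-PreLie bialgebra A, the space of primitive elements Prim(A) is closed under the preLie product • if and only if the map f_A : Prim(A) → Prim(A), a ↦ a•1, is zero. -/
open TensorProduct

lemma tmul_right_cancel {K A : Type*} [Field K] [AddCommGroup A] [Module K A]
    {x y : A} (h : x ⊗ₜ[K] y = 0) (hy : y ≠ 0) : x = 0 := by
  have hex : ∃ φ : Module.Dual K A, φ y ≠ 0 := by
    by_contra hcon
    push_neg at hcon
    exact hy ((Module.forall_dual_apply_eq_zero_iff K y).mp hcon)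
  obtain ⟨φ, hφ⟩ := hex
  have := congrArg (fun z => TensorProduct.rid K A (TensorProduct.map LinearMap.id φ z)) h
  simp only [TensorProduct.map_tmul, LinearMap.id_apply,
    TensorProduct.rid_tmul, map_zero] at this
  rcases smul_eq_zero.mp this with h1 | h1
  · exact absurd h1 hφ
  · exact h1

/-- In a Com-PreLie bialgebra `A`, the space of primitive elements is closed
under the preLie product `•` if and only if `f_A : Prim(A) → Prim(A)`,
`a ↦ a • 1`, is zero. -/
theorem prim_closed_iff_fA_eq_zero {K A : Type*} [Field K] [CharZero K]
    [CommRing A] [Bialgebra K A]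
    (bul : A →ₗ[K] A →ₗ[K] A)
    (hpre : ∀ a b c : A,
      bul (bul a b) c - bul a (bul b c) = bul (bul a c) b - bul a (bul c b))
    (hleib : ∀ a b c : A, bul (a * b) c = bul a c * b + a * bul b c)
    (hcompat : ∀ a b : A, Coalgebra.comul (R := K) (bul a b) =
      TensorProduct.map LinearMap.id (bul.flip b) (Coalgebra.comul (R := K) a)
      + TensorProduct.map (TensorProduct.lift bul) (LinearMap.mul' K A)
          (TensorProduct.tensorTensorTensorComm K A A A A
            (Coalgebra.comul (R := K) a ⊗ₜ[K] Coalgebra.comul (R := K) b))) :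
    (∀ a b : A, Coalgebra.comul (R := K) a = a ⊗ₜ[K] 1 + 1 ⊗ₜ[K] a →
        Coalgebra.comul (R := K) b = b ⊗ₜ[K] 1 + 1 ⊗ₜ[K] b →
        Coalgebra.comul (R := K) (bul a b) =
          (bul a b) ⊗ₜ[K] 1 + 1 ⊗ₜ[K] (bul a b)) ↔
      (∀ a : A, Coalgebra.comul (R := K) a = a ⊗ₜ[K] 1 + 1 ⊗ₜ[K] a →
        bul a 1 = 0) := by
  -- bul 1 c = 0 for all c
  have h1 : ∀ c : A, bul 1 c = 0 := by
    intro c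
    have h := hleib 1 1 c
    rw [one_mul, mul_one, one_mul] at h
    exact (left_eq_add.mp h)
  -- key computation of comul (bul a b) for primitive a, b
  have key : ∀ a b : A, Coalgebra.comul (R := K) a = a ⊗ₜ[K] 1 + 1 ⊗ₜ[K] a →
      Coalgebra.comul (R := K) b = b ⊗ₜ[K] 1 + 1 ⊗ₜ[K] b →
      Coalgebra.comul (R := K) (bul a b) =
        (bul a b) ⊗ₜ[K] 1 + 1 ⊗ₜ[K] (bul a b) + (bul a 1) ⊗ₜ[K] b := by
    intro a b ha hb
    rw [hcompat a b, ha, hb]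
    simp only [tmul_add, add_tmul, map_add, TensorProduct.map_tmul,
      TensorProduct.tensorTensorTensorComm_tmul, TensorProduct.lift.tmul,
      LinearMap.mul'_apply, LinearMap.id_apply, LinearMap.flip_apply, h1,
      one_mul, mul_one, zero_tmul, tmul_zero, add_zero, zero_add]
    abel
  constructor
  · intro hcl a ha
    have h0 : (bul a 1) ⊗ₜ[K] a = 0 := by
      have hk := key a a ha ha
      have hc := hcl a a ha ha
      rw [hc] at hk
      have := hk.symm
      rwa [add_eq_left] at this
    by_cases haz : a = 0
    · subst haz; simp
    · exact tmul_right_cancel h0 haz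
  · intro hf a b ha hb
    rw [key a b ha hb, hf a ha, zero_tmul, add_zero]
end

section
/- Let A₁, A₂ be Com-PreLie algebras and ε : A₁ → K a linear map satisfying ε(a•b) = ε(b•a) for all a,b ∈ A₁. Then A₁⊗A₂ with componentwise product (a₁⊗a₂)(b₁⊗b₂) = a₁b₁⊗a₂b₂ and with (a₁⊗a₂)•_ε(b₁⊗b₂) = (a₁•b₁)⊗a₂b₂ + ε(b₁) a₁⊗(a₂•b₂) is a Com-PreLie algebra. -/
open TensorProduct

/-- The tensor product of two Com-PreLie algebras, with twisted preLie product
`(a₁⊗a₂) •_ε (b₁⊗b₂) = (a₁•b₁)⊗a₂b₂ + ε(b₁) a₁⊗(a₂•b₂)`, is a Com-PreLie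
algebra, provided `ε(a•b) = ε(b•a)`. -/
theorem tensorProduct_comPreLie {K A₁ A₂ : Type*} [Field K] [CharZero K]
    [AddCommGroup A₁] [Module K A₁] [AddCommGroup A₂] [Module K A₂]
    (mul₁ bul₁ : A₁ →ₗ[K] A₁ →ₗ[K] A₁) (mul₂ bul₂ : A₂ →ₗ[K] A₂ →ₗ[K] A₂)
    (hcomm₁ : ∀ a b : A₁, mul₁ a b = mul₁ b a)
    (hassoc₁ : ∀ a b c : A₁, mul₁ (mul₁ a b) c = mul₁ a (mul₁ b c))
    (hpre₁ : ∀ a b c : A₁,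
      bul₁ (bul₁ a b) c - bul₁ a (bul₁ b c) = bul₁ (bul₁ a c) b - bul₁ a (bul₁ c b))
    (hleib₁ : ∀ a b c : A₁,
      bul₁ (mul₁ a b) c = mul₁ (bul₁ a c) b + mul₁ a (bul₁ b c))
    (hcomm₂ : ∀ a b : A₂, mul₂ a b = mul₂ b a)
    (hassoc₂ : ∀ a b c : A₂, mul₂ (mul₂ a b) c = mul₂ a (mul₂ b c))
    (hpre₂ : ∀ a b c : A₂,
      bul₂ (bul₂ a b) c - bul₂ a (bul₂ b c) = bul₂ (bul₂ a c) b - bul₂ a (bul₂ c b))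
    (hleib₂ : ∀ a b c : A₂,
      bul₂ (mul₂ a b) c = mul₂ (bul₂ a c) b + mul₂ a (bul₂ b c))
    (ε : A₁ →ₗ[K] K)
    (hε : ∀ a b : A₁, ε (bul₁ a b) = ε (bul₁ b a))
    (M B : (A₁ ⊗[K] A₂) →ₗ[K] (A₁ ⊗[K] A₂) →ₗ[K] (A₁ ⊗[K] A₂))
    (hM : ∀ (a₁ b₁ : A₁) (a₂ b₂ : A₂),
      M (a₁ ⊗ₜ[K] a₂) (b₁ ⊗ₜ[K] b₂) = mul₁ a₁ b₁ ⊗ₜ[K] mul₂ a₂ b₂)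
    (hB : ∀ (a₁ b₁ : A₁) (a₂ b₂ : A₂),
      B (a₁ ⊗ₜ[K] a₂) (b₁ ⊗ₜ[K] b₂) =
        bul₁ a₁ b₁ ⊗ₜ[K] mul₂ a₂ b₂ + ε b₁ • (a₁ ⊗ₜ[K] bul₂ a₂ b₂)) :
    (∀ x y : A₁ ⊗[K] A₂, M x y = M y x) ∧
    (∀ x y z : A₁ ⊗[K] A₂, M (M x y) z = M x (M y z)) ∧
    (∀ x y z : A₁ ⊗[K] A₂,
      B (B x y) z - B x (B y z) = B (B x z) y - B x (B z y)) ∧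
    (∀ x y z : A₁ ⊗[K] A₂, B (M x y) z = M (B x z) y + M x (B y z)) := by
  refine ⟨?_, ?_, ?_, ?_⟩
  · -- commutativity
    have hflip : M = M.flip := by
      ext a₁ a₂ b₁ b₂
      simp only [TensorProduct.AlgebraTensorModule.curry_apply, LinearMap.coe_comp, Function.comp_apply, LinearMap.coe_restrictScalars, TensorProduct.curry_apply, LinearMap.flip_apply, hM]
      rw [hcomm₁, hcomm₂]
    intro x y
    conv_rhs => rw [hflip]
    rfl
  · -- associativity
    intro x y z
    induction z using TensorProduct.induction_on with
    | zero => simp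
    | add u v hu hv =>
        simp only [map_add, LinearMap.map_add, LinearMap.add_apply, hu, hv]
    | tmul c₁ c₂ =>
    induction y using TensorProduct.induction_on with
    | zero => simp
    | add u v hu hv =>
        simp only [map_add, LinearMap.map_add, LinearMap.add_apply, hu, hv]
    | tmul b₁ b₂ =>
    induction x using TensorProduct.induction_on with
    | zero => simp
    | add u v hu hv =>
        simp only [map_add, LinearMap.map_add, LinearMap.add_apply, hu, hv]
    | tmul a₁ a₂ =>
    simp only [hM, hassoc₁, hassoc₂]
  · -- preLie
    intro x y z
    rw [sub_eq_sub_iff_add_eq_add]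
    induction z using TensorProduct.induction_on with
    | zero => simp
    | add u v hu hv =>
        simp only [map_add, LinearMap.map_add, LinearMap.add_apply,
          eq_sub_of_add_eq hu, eq_sub_of_add_eq hv]; abel
    | tmul c₁ c₂ =>
    induction y using TensorProduct.induction_on with
    | zero => simp
    | add u v hu hv =>
        simp only [map_add, LinearMap.map_add, LinearMap.add_apply,
          eq_sub_of_add_eq hu, eq_sub_of_add_eq hv]; abel
    | tmul b₁ b₂ =>
    induction x using TensorProduct.induction_on with
    | zero => simp
    | add u v hu hv =>
        simp only [map_add, LinearMap.map_add, LinearMap.add_apply,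
          eq_sub_of_add_eq hu, eq_sub_of_add_eq hv]; abel
    | tmul a₁ a₂ =>
    simp only [hM, hB, map_add, LinearMap.map_add, LinearMap.add_apply,
      map_smul, LinearMap.map_smul, LinearMap.smul_apply, add_tmul, tmul_add, smul_add,
      tmul_smul, smul_smul]
    simp only [hleib₂, tmul_add, smul_add]
    rw [hε c₁ b₁, hcomm₂ c₂ b₂]
    have p1 : bul₁ (bul₁ a₁ b₁) c₁
        = bul₁ (bul₁ a₁ c₁) b₁ - bul₁ a₁ (bul₁ c₁ b₁) + bul₁ a₁ (bul₁ b₁ c₁) := by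
      have h := hpre₁ a₁ b₁ c₁; rw [sub_eq_sub_iff_add_eq_add] at h
      rw [eq_sub_of_add_eq h]; abel
    have p2 : bul₂ (bul₂ a₂ b₂) c₂
        = bul₂ (bul₂ a₂ c₂) b₂ - bul₂ a₂ (bul₂ c₂ b₂) + bul₂ a₂ (bul₂ b₂ c₂) := by
      have h := hpre₂ a₂ b₂ c₂; rw [sub_eq_sub_iff_add_eq_add] at h
      rw [eq_sub_of_add_eq h]; abel
    rw [p1, p2]
    have e1 : mul₂ (mul₂ a₂ b₂) c₂ = mul₂ a₂ (mul₂ b₂ c₂) := hassoc₂ _ _ _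
    have e3 : mul₂ (mul₂ a₂ c₂) b₂ = mul₂ a₂ (mul₂ b₂ c₂) := by
      rw [hassoc₂, hcomm₂ c₂ b₂]
    rw [e1, e3]
    simp only [sub_tmul, add_tmul, tmul_sub, tmul_add, smul_sub, smul_add]
    rw [mul_comm (ε b₁) (ε c₁)]
    abel
  · -- Leibniz
    intro x y z
    induction z using TensorProduct.induction_on with
    | zero => simp
    | add u v hu hv =>
        simp only [map_add, LinearMap.map_add, LinearMap.add_apply, hu, hv]; abel
    | tmul c₁ c₂ =>
    induction y using TensorProduct.induction_on with
    | zero => simp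
    | add u v hu hv =>
        simp only [map_add, LinearMap.map_add, LinearMap.add_apply, hu, hv]; abel
    | tmul b₁ b₂ =>
    induction x using TensorProduct.induction_on with
    | zero => simp
    | add u v hu hv =>
        simp only [map_add, LinearMap.map_add, LinearMap.add_apply, hu, hv]; abel
    | tmul a₁ a₂ =>
    simp only [hM, hB, hleib₁, hleib₂, map_add, LinearMap.map_add, LinearMap.add_apply,
      map_smul, LinearMap.map_smul, LinearMap.smul_apply, add_tmul, tmul_add, smul_add]
    have e1 : mul₂ (mul₂ a₂ b₂) c₂ = mul₂ (mul₂ a₂ c₂) b₂ := by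
      rw [hassoc₂, hcomm₂ b₂ c₂, ← hassoc₂]
    rw [e1]
    conv_rhs => rw [← hassoc₂ a₂ b₂ c₂, e1]
    abel
end

section
/- Let A be a commutative bialgebra generated as an algebra by a subspace V, and let • be a bilinear product on A satisfying the Leibniz identity (ab)•c = (a•c)b + a(b•c) for all a,b,c ∈ A. If for all x ∈ V and b,c ∈ A the preLie identity (x•b)•c - x•(b•c) = (x•c)•b - x•(c•b) holds and Δ(x•b) = x⁽¹⁾⊗(x⁽²⁾•b) + (x⁽¹⁾•b⁽¹⁾)⊗(x⁽²⁾b⁽²⁾), then these two identities hold for all a ∈ A in place of x; i.e., A is a Com-PreLie bialgebra. -/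
/-!
For fixed `b` and `c`, the failure of either identity, as a function of `a`, is a linear map
`D` satisfying `D (x * y) = D x * f y + f x * D y`, with `f` the identity of `A` for the preLie
identity and the algebra map `Δ` for the coproduct identity: the Leibniz rule makes the
symmetric cross terms `(x • b)(y • c) + (x • c)(y • b)` cancel in the first case, and the
multiplicativity of `Δ` gives the twisted rule in the second. Such a map vanishes on the
subalgebra generated by any set on which it vanishes.
-/

open TensorProduct

theorem LinearMap.eq_zero_of_leibniz_of_adjoin_eq_top {R A B : Type*} [CommSemiring R]
    [Semiring A] [Algebra R A] [Ring B] [Algebra R B] (f : A →ₐ[R] B) (D : A →ₗ[R] B)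
    (hD : ∀ x y, D (x * y) = D x * f y + f x * D y) {s : Set A}
    (hs : Algebra.adjoin R s = ⊤) (h : ∀ x ∈ s, D x = 0) (a : A) : D a = 0 := by
  have hD1 : D 1 = 0 := by simpa using hD 1 1
  induction (hs ▸ Algebra.mem_top : a ∈ Algebra.adjoin R s) using Algebra.adjoin_induction with
  | mem x hx => exact h x hx
  | algebraMap r => rw [Algebra.algebraMap_eq_smul_one, map_smul, hD1, smul_zero]
  | add x y _ _ hx hy => rw [map_add, hx, hy, add_zero]
  | mul x y _ _ hx hy => rw [hD, hx, hy, zero_mul, mul_zero, add_zero]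

theorem TensorProduct.map_id_mul_of_leibniz {R A : Type*} [CommSemiring R] [Semiring A]
    [Algebra R A] (d : A →ₗ[R] A) (hd : ∀ x y, d (x * y) = d x * y + x * d y)
    (u v : A ⊗[R] A) :
    map LinearMap.id d (u * v) = map LinearMap.id d u * v + u * map LinearMap.id d v := by
  induction u using TensorProduct.induction_on with
  | zero => simp
  | add u u' hu hu' => simp only [add_mul, map_add, hu, hu']; abel
  | tmul u₁ u₂ =>
    induction v using TensorProduct.induction_on with
    | zero => simp
    | add v v' hv hv' => simp only [mul_add, map_add, hv, hv']; abel
    | tmul v₁ v₂ => simp [hd, tmul_add]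

section
variable {K A : Type*} [CommSemiring K] [CommRing A]

section Algebra
variable [Algebra K A] (bul : A →ₗ[K] A →ₗ[K] A)

theorem map_lift_mul'_tensorTensorTensorComm_mul_tmul
    (hleib : ∀ a b c : A, bul (a * b) c = bul a c * b + a * bul b c) (u v w : A ⊗[K] A) :
    map (lift bul) (LinearMap.mul' K A) (tensorTensorTensorComm K A A A A ((u * v) ⊗ₜ w)) =
      map (lift bul) (LinearMap.mul' K A) (tensorTensorTensorComm K A A A A (u ⊗ₜ w)) * v +
        u * map (lift bul) (LinearMap.mul' K A)
          (tensorTensorTensorComm K A A A A (v ⊗ₜ w)) := by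
  induction w using TensorProduct.induction_on with
  | zero => simp
  | add w w' hw hw' => simp only [tmul_add, map_add, hw, hw', mul_add, add_mul]; abel
  | tmul b₁ b₂ =>
    induction u using TensorProduct.induction_on with
    | zero => simp
    | add u u' hu hu' => simp only [add_mul, add_tmul, map_add, hu, hu']; abel
    | tmul u₁ u₂ =>
      induction v using TensorProduct.induction_on with
      | zero => simp
      | add v v' hv hv' => simp only [mul_add, add_tmul, map_add, hv, hv']; abel
      | tmul v₁ v₂ => simp [hleib, add_tmul, mul_comm, mul_left_comm]

def rightAssociator (b c : A) : A →ₗ[K] A :=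
  bul.flip c ∘ₗ bul.flip b - bul.flip (bul b c)

theorem rightAssociator_apply (a b c : A) :
    rightAssociator bul b c a = bul (bul a b) c - bul a (bul b c) := rfl

theorem rightAssociator_mul (hleib : ∀ a b c : A, bul (a * b) c = bul a c * b + a * bul b c)
    (b c x y : A) :
    rightAssociator bul b c (x * y) = rightAssociator bul b c x * y +
      x * rightAssociator bul b c y + (bul x b * bul y c + bul x c * bul y b) := by
  simp only [rightAssociator_apply, hleib, map_add, LinearMap.add_apply]
  ring

theorem preLie_of_adjoin_eq_top (hleib : ∀ a b c : A, bul (a * b) c = bul a c * b + a * bul b c)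
    {s : Set A} (hs : Algebra.adjoin K s = ⊤)
    (hpre : ∀ x ∈ s, ∀ b c : A, rightAssociator bul b c x = rightAssociator bul c b x)
    (a b c : A) : rightAssociator bul b c a = rightAssociator bul c b a := by
  refine sub_eq_zero.mp <| LinearMap.eq_zero_of_leibniz_of_adjoin_eq_top (AlgHom.id K A)
    (rightAssociator bul b c - rightAssociator bul c b) (fun x y => ?_) hs
    (fun x hx => sub_eq_zero.mpr (hpre x hx b c)) a
  simp only [LinearMap.sub_apply, rightAssociator_mul bul hleib, AlgHom.id_apply]
  ring

end Algebra

section Bialgebra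
variable [Bialgebra K A] (bul : A →ₗ[K] A →ₗ[K] A)

noncomputable def comulDefect (b : A) : A →ₗ[K] A ⊗[K] A :=
  Coalgebra.comul ∘ₗ bul.flip b - map LinearMap.id (bul.flip b) ∘ₗ Coalgebra.comul -
    map (lift bul) (LinearMap.mul' K A) ∘ₗ (tensorTensorTensorComm K A A A A).toLinearMap ∘ₗ
      (TensorProduct.mk K _ _).flip (Coalgebra.comul b) ∘ₗ Coalgebra.comul

theorem comulDefect_apply (a b : A) : comulDefect bul b a =
    Coalgebra.comul (bul a b) - map LinearMap.id (bul.flip b) (Coalgebra.comul a) -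
      map (lift bul) (LinearMap.mul' K A)
        (tensorTensorTensorComm K A A A A (Coalgebra.comul a ⊗ₜ Coalgebra.comul b)) := rfl

theorem comulDefect_mul (hleib : ∀ a b c : A, bul (a * b) c = bul a c * b + a * bul b c)
    (b x y : A) : comulDefect bul b (x * y) =
      comulDefect bul b x * Coalgebra.comul y + Coalgebra.comul x * comulDefect bul b y := by
  have hd : ∀ x y, bul.flip b (x * y) = bul.flip b x * y + x * bul.flip b y :=
    fun x y => hleib x y b
  simp only [comulDefect_apply, hleib, map_add, Bialgebra.comul_mul,
    map_id_mul_of_leibniz _ hd, map_lift_mul'_tensorTensorTensorComm_mul_tmul bul hleib]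
  ring

theorem comul_bul_of_adjoin_eq_top
    (hleib : ∀ a b c : A, bul (a * b) c = bul a c * b + a * bul b c)
    {s : Set A} (hs : Algebra.adjoin K s = ⊤)
    (hcompat : ∀ x ∈ s, ∀ b : A, Coalgebra.comul (bul x b) =
      map LinearMap.id (bul.flip b) (Coalgebra.comul x) + map (lift bul) (LinearMap.mul' K A)
        (tensorTensorTensorComm K A A A A (Coalgebra.comul x ⊗ₜ Coalgebra.comul b)))
    (a b : A) : Coalgebra.comul (bul a b) =
      map LinearMap.id (bul.flip b) (Coalgebra.comul a) + map (lift bul) (LinearMap.mul' K A)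
        (tensorTensorTensorComm K A A A A (Coalgebra.comul a ⊗ₜ Coalgebra.comul b)) := by
  have h := LinearMap.eq_zero_of_leibniz_of_adjoin_eq_top (Bialgebra.comulAlgHom K A)
    (comulDefect bul b) (comulDefect_mul bul hleib b) hs
    (fun x hx => by rw [comulDefect_apply, hcompat x hx, sub_sub, sub_self]) a
  rwa [comulDefect_apply, sub_sub, sub_eq_zero] at h

end Bialgebra
end

theorem comPreLie_of_generators_general {K A : Type*} [Field K]
    [CommRing A] [Bialgebra K A]
    (V : Submodule K A) (hgen : Algebra.adjoin K (V : Set A) = ⊤)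
    (bul : A →ₗ[K] A →ₗ[K] A)
    (hleib : ∀ a b c : A, bul (a * b) c = bul a c * b + a * bul b c)
    (hpreV : ∀ x ∈ V, ∀ b c : A,
      bul (bul x b) c - bul x (bul b c) = bul (bul x c) b - bul x (bul c b))
    (hcompatV : ∀ x ∈ V, ∀ b : A, Coalgebra.comul (R := K) (bul x b) =
      TensorProduct.map LinearMap.id (bul.flip b) (Coalgebra.comul (R := K) x)
      + TensorProduct.map (TensorProduct.lift bul) (LinearMap.mul' K A)
          (TensorProduct.tensorTensorTensorComm K A A A A
            (Coalgebra.comul (R := K) x ⊗ₜ[K] Coalgebra.comul (R := K) b))) :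
    (∀ a b c : A,
      bul (bul a b) c - bul a (bul b c) = bul (bul a c) b - bul a (bul c b)) ∧
    (∀ a b : A, Coalgebra.comul (R := K) (bul a b) =
      TensorProduct.map LinearMap.id (bul.flip b) (Coalgebra.comul (R := K) a)
      + TensorProduct.map (TensorProduct.lift bul) (LinearMap.mul' K A)
          (TensorProduct.tensorTensorTensorComm K A A A A
            (Coalgebra.comul (R := K) a ⊗ₜ[K] Coalgebra.comul (R := K) b))) := by
  exact ⟨preLie_of_adjoin_eq_top bul hleib hgen hpreV,
    comul_bul_of_adjoin_eq_top bul hleib hgen hcompatV⟩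

/-- If a commutative bialgebra `A` is generated as an algebra by a subspace `V`,
`•` satisfies the Leibniz identity on all of `A`, and both the preLie identity
and the coproduct compatibility hold whenever the first argument is in `V`,
then they hold for all elements: `A` is a Com-PreLie bialgebra. -/
theorem comPreLie_of_generators {K A : Type*} [Field K] [CharZero K]
    [CommRing A] [Bialgebra K A]
    (V : Submodule K A) (hgen : Algebra.adjoin K (V : Set A) = ⊤)
    (bul : A →ₗ[K] A →ₗ[K] A)
    (hleib : ∀ a b c : A, bul (a * b) c = bul a c * b + a * bul b c)
    (hpreV : ∀ x ∈ V, ∀ b c : A,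
      bul (bul x b) c - bul x (bul b c) = bul (bul x c) b - bul x (bul c b))
    (hcompatV : ∀ x ∈ V, ∀ b : A, Coalgebra.comul (R := K) (bul x b) =
      TensorProduct.map LinearMap.id (bul.flip b) (Coalgebra.comul (R := K) x)
      + TensorProduct.map (TensorProduct.lift bul) (LinearMap.mul' K A)
          (TensorProduct.tensorTensorTensorComm K A A A A
            (Coalgebra.comul (R := K) x ⊗ₜ[K] Coalgebra.comul (R := K) b))) :
    (∀ a b c : A,
      bul (bul a b) c - bul a (bul b c) = bul (bul a c) b - bul a (bul c b)) ∧
    (∀ a b : A, Coalgebra.comul (R := K) (bul a b) =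
      TensorProduct.map LinearMap.id (bul.flip b) (Coalgebra.comul (R := K) a)
      + TensorProduct.map (TensorProduct.lift bul) (LinearMap.mul' K A)
          (TensorProduct.tensorTensorTensorComm K A A A A
            (Coalgebra.comul (R := K) a ⊗ₜ[K] Coalgebra.comul (R := K) b))) :=
  comPreLie_of_generators_general V hgen bul hleib hpreV hcompatV
end

section
/- With • defined from ϖ as above, the Leibniz identity (u⧢v)•w = (u•w)⧢v + u⧢(v•w) holds for all u,v,w ∈ T(V) if and only if ϖ((u⧢v)⊗w) = ε(u)ϖ(v⊗w) + ε(v)ϖ(u⊗w) for all u,v,w ∈ T(V). -/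
/-!
Applying the projection `π` onto `V` to the Leibniz identity, and using
`π (u ⧢ v) = ε(u) π(v) + ε(v) π(u)`, `ε (u • v) = 0` and `π (u • v) = ϖ (u ⊗ v)`, gives the
condition on `ϖ`.

Conversely, fix `w` and let `D(u, v) = (u ⧢ v) • w - (u • w) ⧢ v - u ⧢ (v • w)`. Since `Δ` is
multiplicative for `⧢`, the coproduct formula for `•` gives
`ΔD(u, v) = (u⁽¹⁾ ⧢ v⁽¹⁾) ⊗ D(u⁽²⁾, v⁽²⁾) + R`, where `R` is killed by `a ⊗ b ↦ π(a) b` thanks to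
the condition on `ϖ` and the commutativity and associativity of `⧢`. As `ε D = 0`, that map
recovers `D` from `ΔD`, so `D(u, v) = π(u⁽¹⁾) D(u⁽²⁾, v) + π(v⁽¹⁾) D(u, v⁽²⁾)`. Only the first
letter of a word survives in `π(u⁽¹⁾)`, so the right side involves `D` at shorter words only, and
`D = 0` by induction.
-/

open TensorProduct

theorem TensorProduct.map_lift_lift_tensorTensorTensorComm {R M N P Q X Y : Type*} [CommRing R]
    [AddCommGroup M] [AddCommGroup N] [AddCommGroup P] [AddCommGroup Q] [AddCommGroup X]
    [AddCommGroup Y] [Module R M] [Module R N] [Module R P] [Module R Q] [Module R X]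
    [Module R Y] (f : M →ₗ[R] P →ₗ[R] X) (g : N →ₗ[R] Q →ₗ[R] Y) (s : M ⊗[R] N)
    (t : P ⊗[R] Q) :
    map (lift f) (lift g) (tensorTensorTensorComm R M N P Q (s ⊗ₜ t)) = map₂ f g s t := by
  induction s using TensorProduct.induction_on with
  | zero => simp
  | add s s' hs hs' => simp [add_tmul, hs, hs']
  | tmul a b =>
    induction t using TensorProduct.induction_on with
    | zero => simp
    | add t t' ht ht' => simp [tmul_add, ht, ht']
    | tmul c d => simp

namespace TensorAlgebra

variable {K V : Type*} [CommRing K] [AddCommGroup V] [Module K V]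

local notation "𝕋" => TensorAlgebra K V

@[elab_as_elim]
theorem induction_ι_mul {C : 𝕋 → Prop} (one : C 1) (ι_mul : ∀ x u, C u → C (ι K x * u))
    (add : ∀ u v, C u → C v → C (u + v)) (smul : ∀ (r : K) u, C u → C (r • u)) (u : 𝕋) :
    C u := by
  let M : Submodule K 𝕋 :=
    { carrier := {u | C u}
      add_mem' := add _ _
      zero_mem' := by simpa using smul 0 1 one
      smul_mem' := smul }
  have mul_mem : ∀ a : 𝕋, ∀ m ∈ M, a * m ∈ M := by
    intro a
    induction a using TensorAlgebra.induction with
    | algebraMap r => intro m hm; rw [← Algebra.smul_def]; exact M.smul_mem r hm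
    | ι x => exact ι_mul x
    | mul a b ha hb => intro m hm; rw [mul_assoc]; exact ha _ (hb _ hm)
    | add a b ha hb => intro m hm; rw [add_mul]; exact M.add_mem (ha _ hm) (hb _ hm)
  simpa [M] using mul_mem u 1 one

structure IsDeconcatenation (Δ : 𝕋 →ₗ[K] 𝕋 ⊗[K] 𝕋) : Prop where
  map_one : Δ 1 = 1 ⊗ₜ 1
  map_ι_mul (x : V) (u : 𝕋) :
    Δ (ι K x * u) = 1 ⊗ₜ (ι K x * u) + (LinearMap.mulLeft K (ι K x)).rTensor 𝕋 (Δ u)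

structure IsShuffle (sh : 𝕋 →ₗ[K] 𝕋 →ₗ[K] 𝕋) : Prop where
  one_left (u : 𝕋) : sh 1 u = u
  one_right (u : 𝕋) : sh u 1 = u
  ι_mul_ι_mul (x y : V) (u w : 𝕋) :
    sh (ι K x * u) (ι K y * w) = ι K x * sh u (ι K y * w) + ι K y * sh (ι K x * u) w

structure IsCounit (ε : 𝕋 →ₗ[K] K) : Prop where
  map_one : ε 1 = 1
  map_ι_mul (x : V) (u : 𝕋) : ε (ι K x * u) = 0

structure IsDegreeOneProjection (π : 𝕋 →ₗ[K] V) : Prop where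
  map_one : π 1 = 0
  map_ι (x : V) : π (ι K x) = x
  map_ι_mul_ι_mul (x y : V) (u : 𝕋) : π (ι K x * (ι K y * u)) = 0

variable {sh B : TensorAlgebra K V →ₗ[K] TensorAlgebra K V →ₗ[K] TensorAlgebra K V}
  {ε : TensorAlgebra K V →ₗ[K] K} {π : TensorAlgebra K V →ₗ[K] V}
  {Δ : TensorAlgebra K V →ₗ[K] TensorAlgebra K V ⊗[K] TensorAlgebra K V}

theorem IsDegreeOneProjection.map_ι_mul (hπ : IsDegreeOneProjection π) (hε : IsCounit ε)
    (x : V) (u : 𝕋) : π (ι K x * u) = ε u • x := by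
  induction u using induction_ι_mul with
  | one => simp [hπ.map_ι, hε.map_one]
  | ι_mul y u _ => simp [hπ.map_ι_mul_ι_mul, hε.map_ι_mul]
  | add u v hu hv => simp [mul_add, hu, hv, add_smul]
  | smul r u hu => simp [hu, smul_smul]

def projMul (π : 𝕋 →ₗ[K] V) (L : 𝕋 →ₗ[K] 𝕋) : 𝕋 ⊗[K] 𝕋 →ₗ[K] 𝕋 :=
  TensorProduct.lift ((LinearMap.mul K 𝕋 ∘ₗ ι K ∘ₗ π).compl₂ L)

@[simp]
theorem projMul_tmul (L : 𝕋 →ₗ[K] 𝕋) (a b : 𝕋) : projMul π L (a ⊗ₜ b) = ι K (π a) * L b :=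
  rfl

@[simp]
theorem projMul_zero : projMul π (0 : 𝕋 →ₗ[K] 𝕋) = 0 :=
  TensorProduct.ext' fun a b => by simp

@[simp]
theorem projMul_add (L L' : 𝕋 →ₗ[K] 𝕋) : projMul π (L + L') = projMul π L + projMul π L' :=
  TensorProduct.ext' fun a b => by simp [mul_add]

def leibnizDefect (sh B : 𝕋 →ₗ[K] 𝕋 →ₗ[K] 𝕋) (w : 𝕋) : 𝕋 →ₗ[K] 𝕋 →ₗ[K] 𝕋 :=
  sh.compr₂ (B.flip w) - sh ∘ₗ B.flip w - sh.compl₂ (B.flip w)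

@[simp]
theorem leibnizDefect_apply (w u v : 𝕋) :
    leibnizDefect sh B w u v = B (sh u v) w - sh (B u w) v - sh u (B v w) :=
  rfl

theorem lTensor_map₂_sub_map₂_lTensor (w : 𝕋) (s t : 𝕋 ⊗[K] 𝕋) :
    (B.flip w).lTensor 𝕋 (map₂ sh sh s t) - map₂ sh sh ((B.flip w).lTensor 𝕋 s) t -
        map₂ sh sh s ((B.flip w).lTensor 𝕋 t) =
      map₂ sh (leibnizDefect sh B w) s t := by
  induction s using TensorProduct.induction_on with
  | zero => simp
  | add s s' hs hs' =>
    simp only [map_add, LinearMap.add_apply, ← hs, ← hs']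
    abel
  | tmul a b =>
    induction t using TensorProduct.induction_on with
    | zero => simp
    | add t t' ht ht' =>
      simp only [map_add, ← ht, ← ht']
      abel
    | tmul c d => simp [tmul_sub]

namespace IsShuffle

variable (hsh : IsShuffle sh)
include hsh

theorem comm (u v : 𝕋) : sh u v = sh v u := by
  induction u using induction_ι_mul generalizing v with
  | one => simp [hsh.one_left, hsh.one_right]
  | ι_mul x u ihu =>
    induction v using induction_ι_mul with
    | one => simp [hsh.one_left, hsh.one_right]
    | ι_mul y v ihv => rw [hsh.ι_mul_ι_mul, hsh.ι_mul_ι_mul, ihu, ihv, add_comm]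
    | add v v' hv hv' => simp [hv, hv']
    | smul r v hv => simp [hv]
  | add u u' hu hu' => simp [hu, hu']
  | smul r u hu => simp [hu]

theorem counit_apply (hε : IsCounit ε) (u v : 𝕋) : ε (sh u v) = ε u * ε v := by
  induction u using induction_ι_mul generalizing v with
  | one => simp [hsh.one_left, hε.map_one]
  | ι_mul x u _ =>
    induction v using induction_ι_mul with
    | one => simp [hsh.one_right, hε.map_one]
    | ι_mul y v _ => simp [hsh.ι_mul_ι_mul, hε.map_ι_mul]
    | add v v' hv hv' => simp [hv, hv', mul_add]
    | smul r v hv => simp [hv, mul_left_comm]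
  | add u u' hu hu' => simp [hu, hu', add_mul]
  | smul r u hu => simp [hu, mul_assoc]

theorem π_apply (hπ : IsDegreeOneProjection π) (hε : IsCounit ε) (u v : 𝕋) :
    π (sh u v) = ε u • π v + ε v • π u := by
  induction u using induction_ι_mul generalizing v with
  | one => simp [hsh.one_left, hε.map_one, hπ.map_one]
  | ι_mul x u _ =>
    induction v using induction_ι_mul with
    | one => simp [hsh.one_right, hε.map_one, hπ.map_one]
    | ι_mul y v _ =>
      simp [hsh.ι_mul_ι_mul, hπ.map_ι_mul hε, hε.map_ι_mul, hsh.counit_apply hε]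
    | add v v' hv hv' =>
      simp only [map_add, hv, hv', add_smul, smul_add]
      abel
    | smul r v hv => simp [hv, smul_smul, mul_comm]
  | add u u' hu hu' =>
    simp only [map_add, LinearMap.add_apply, hu, hu', add_smul, smul_add]
    abel
  | smul r u hu => simp [hu, smul_smul, mul_comm]

theorem assoc (u v w : 𝕋) : sh (sh u v) w = sh u (sh v w) := by
  induction u using induction_ι_mul generalizing v w with
  | one => simp [hsh.one_left]
  | ι_mul x u ihu =>
    induction v using induction_ι_mul generalizing w with
    | one => simp [hsh.one_left, hsh.one_right]
    | ι_mul y v ihv =>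
      induction w using induction_ι_mul with
      | one => simp [hsh.one_right]
      | ι_mul z w ihw =>
        have lhs : sh (sh (ι K x * u) (ι K y * v)) (ι K z * w) =
            ι K x * sh (sh u (ι K y * v)) (ι K z * w) +
              ι K y * sh (sh (ι K x * u) v) (ι K z * w) +
              ι K z * sh (sh (ι K x * u) (ι K y * v)) w := by
          rw [hsh.ι_mul_ι_mul x y u v]
          simp only [map_add, LinearMap.add_apply, hsh.ι_mul_ι_mul, mul_add]
          abel
        have rhs : sh (ι K x * u) (sh (ι K y * v) (ι K z * w)) =
            ι K x * sh u (sh (ι K y * v) (ι K z * w)) +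
              ι K y * sh (ι K x * u) (sh v (ι K z * w)) +
              ι K z * sh (ι K x * u) (sh (ι K y * v) w) := by
          rw [hsh.ι_mul_ι_mul y z v w]
          simp only [map_add, hsh.ι_mul_ι_mul, mul_add]
          abel
        rw [lhs, rhs, ihu, ihv, ihw]
      | add w w' hw hw' => simp [hw, hw']
      | smul r w hw => simp [hw]
    | add v v' hv hv' => simp [hv, hv']
    | smul r v hv => simp [hv]
  | add u u' hu hu' => simp [hu, hu']
  | smul r u hu => simp [hu]

theorem map₂_one_tmul_one (t : 𝕋 ⊗[K] 𝕋) : map₂ sh sh (1 ⊗ₜ 1) t = t := by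
  induction t using TensorProduct.induction_on with
  | zero => simp
  | add t t' ht ht' => simp only [map_add, ht, ht']
  | tmul c d => simp [hsh.one_left]

theorem map₂_apply_one_tmul_one (s : 𝕋 ⊗[K] 𝕋) : map₂ sh sh s (1 ⊗ₜ 1) = s := by
  induction s using TensorProduct.induction_on with
  | zero => simp
  | add s s' hs hs' => simp only [map_add, LinearMap.add_apply, hs, hs']
  | tmul c d => simp [hsh.one_right]

theorem map₂_rTensor_mulLeft_one_tmul (x : V) (s : 𝕋 ⊗[K] 𝕋) (b : 𝕋) :
    map₂ sh sh ((LinearMap.mulLeft K (ι K x)).rTensor 𝕋 s) (1 ⊗ₜ b) =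
      (LinearMap.mulLeft K (ι K x)).rTensor 𝕋 (map₂ sh sh s (1 ⊗ₜ b)) := by
  induction s using TensorProduct.induction_on with
  | zero => simp
  | add s s' hs hs' => simp only [map_add, LinearMap.add_apply, hs, hs']
  | tmul a c => simp [hsh.one_right]

theorem map₂_one_tmul_rTensor_mulLeft (y : V) (a : 𝕋) (t : 𝕋 ⊗[K] 𝕋) :
    map₂ sh sh (1 ⊗ₜ a) ((LinearMap.mulLeft K (ι K y)).rTensor 𝕋 t) =
      (LinearMap.mulLeft K (ι K y)).rTensor 𝕋 (map₂ sh sh (1 ⊗ₜ a) t) := by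
  induction t using TensorProduct.induction_on with
  | zero => simp
  | add t t' ht ht' => simp only [map_add, ht, ht']
  | tmul c d => simp [hsh.one_left]

theorem map₂_rTensor_mulLeft_rTensor_mulLeft (x y : V) (s t : 𝕋 ⊗[K] 𝕋) :
    map₂ sh sh ((LinearMap.mulLeft K (ι K x)).rTensor 𝕋 s)
        ((LinearMap.mulLeft K (ι K y)).rTensor 𝕋 t) =
      (LinearMap.mulLeft K (ι K x)).rTensor 𝕋
          (map₂ sh sh s ((LinearMap.mulLeft K (ι K y)).rTensor 𝕋 t)) +
        (LinearMap.mulLeft K (ι K y)).rTensor 𝕋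
          (map₂ sh sh ((LinearMap.mulLeft K (ι K x)).rTensor 𝕋 s) t) := by
  induction s using TensorProduct.induction_on with
  | zero => simp
  | add s s' hs hs' => simp only [map_add, LinearMap.add_apply, hs, hs']; abel
  | tmul a b =>
    induction t using TensorProduct.induction_on with
    | zero => simp
    | add t t' ht ht' => simp only [map_add, ht, ht']; abel
    | tmul c d => simp [hsh.ι_mul_ι_mul, add_tmul]

theorem projMul_id_map₂_leibniz (hπ : IsDegreeOneProjection π) (hε : IsCounit ε)
    (hεB : ∀ u v, ε (B u v) = 0)
    (hcond : ∀ u v w, π (B (sh u v) w) = ε u • π (B v w) + ε v • π (B u w))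
    (s t r : 𝕋 ⊗[K] 𝕋) :
    projMul π LinearMap.id (map₂ B sh (map₂ sh sh s t) r) =
      projMul π LinearMap.id (map₂ sh sh (map₂ B sh s r) t) +
        projMul π LinearMap.id (map₂ sh sh s (map₂ B sh t r)) := by
  induction s using TensorProduct.induction_on with
  | zero => simp
  | add s s' hs hs' =>
    simp only [map_add, LinearMap.add_apply, hs, hs']
    abel
  | tmul a b =>
    induction t using TensorProduct.induction_on with
    | zero => simp
    | add t t' ht ht' =>
      simp only [map_add, LinearMap.add_apply, ht, ht']
      abel
    | tmul c d =>
      induction r using TensorProduct.induction_on with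
      | zero => simp
      | add r r' hr hr' =>
        simp only [map_add, LinearMap.add_apply, hr, hr']
        abel
      | tmul e f =>
        have h₁ : sh (sh b f) d = sh (sh b d) f := by
          rw [hsh.assoc, hsh.comm f, ← hsh.assoc]
        have h₂ : sh b (sh d f) = sh (sh b d) f := (hsh.assoc _ _ _).symm
        simp only [map₂_apply_tmul, map_tmul, projMul_tmul, LinearMap.id_apply, hcond,
          hsh.π_apply hπ hε, hεB, h₁, h₂, zero_smul, add_zero, zero_add, map_add, add_mul]
        exact add_comm _ _

end IsShuffle

namespace IsDeconcatenation

variable (hΔ : IsDeconcatenation Δ)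
include hΔ

theorem rTensor_counit (hε : IsCounit ε) (z : 𝕋) : ε.rTensor 𝕋 (Δ z) = 1 ⊗ₜ z := by
  induction z using induction_ι_mul with
  | one => simp [hΔ.map_one, hε.map_one]
  | ι_mul x u _ =>
    have hx : ∀ t, ε.rTensor 𝕋 ((LinearMap.mulLeft K (ι K x)).rTensor 𝕋 t) = 0 := fun t => by
      induction t using TensorProduct.induction_on <;> simp_all [hε.map_ι_mul]
    simp [hΔ.map_ι_mul, hε.map_one, hx]
  | add u v hu hv => simp [hu, hv, tmul_add]
  | smul r u hu => simp [hu]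

theorem lTensor_counit (hε : IsCounit ε) (z : 𝕋) : ε.lTensor 𝕋 (Δ z) = z ⊗ₜ 1 := by
  induction z using induction_ι_mul with
  | one => simp [hΔ.map_one, hε.map_one]
  | ι_mul x u hu =>
    rw [hΔ.map_ι_mul, map_add, ← LinearMap.comp_apply (ε.lTensor 𝕋),
      LinearMap.lTensor_comp_rTensor, ← LinearMap.rTensor_comp_lTensor, LinearMap.comp_apply, hu]
    simp [hε.map_ι_mul]
  | add u v hu hv => simp [hu, hv, add_tmul]
  | smul r u hu => simp [hu, smul_tmul']

theorem map_shuffle (hsh : IsShuffle sh) (u v : 𝕋) :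
    Δ (sh u v) = map₂ sh sh (Δ u) (Δ v) := by
  induction u using induction_ι_mul generalizing v with
  | one => rw [hsh.one_left, hΔ.map_one, hsh.map₂_one_tmul_one]
  | ι_mul x u ihu =>
    induction v using induction_ι_mul with
    | one => rw [hsh.one_right, hΔ.map_one, hsh.map₂_apply_one_tmul_one]
    | ι_mul y v ihv =>
      rw [hsh.ι_mul_ι_mul, map_add, hΔ.map_ι_mul, hΔ.map_ι_mul, ihu, ihv, hΔ.map_ι_mul x u,
        hΔ.map_ι_mul y v]
      simp only [map_add, LinearMap.add_apply, hsh.map₂_rTensor_mulLeft_one_tmul,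
        hsh.map₂_one_tmul_rTensor_mulLeft, hsh.map₂_rTensor_mulLeft_rTensor_mulLeft]
      simp only [map₂_apply_tmul, map_tmul, hsh.one_left, hsh.ι_mul_ι_mul, tmul_add]
      abel
    | add v v' hv hv' => simp [hv, hv']
    | smul r v hv => simp [hv]
  | add u u' hu hu' => simp [hu, hu']
  | smul r u hu => simp [hu]

theorem counit_eq_zero_of_comul_eq (hε : IsCounit ε) (hsh : IsShuffle sh)
    (hB : ∀ u v, Δ (B u v) = (B.flip v).lTensor 𝕋 (Δ u) + map₂ B sh (Δ u) (Δ v)) (u v : 𝕋) :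
    ε (B u v) = 0 := by
  -- `(ε ⊗ ε) (Δ (B u v))` is `ε (B u v)`, but each of the two summands of `hB` contributes it.
  have counit_lTensor : ∀ s : 𝕋 ⊗[K] 𝕋,
      ε (TensorProduct.lid K 𝕋 (ε.rTensor 𝕋 ((B.flip v).lTensor 𝕋 s))) =
        ε (B (TensorProduct.lid K 𝕋 (ε.rTensor 𝕋 s)) v) := fun s => by
    induction s using TensorProduct.induction_on with
    | zero => simp
    | add s s' hs hs' => simp only [map_add, LinearMap.add_apply, hs, hs']
    | tmul a b => simp
  have counit_map₂ : ∀ s t : 𝕋 ⊗[K] 𝕋,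
      ε (TensorProduct.lid K 𝕋 (ε.rTensor 𝕋 (map₂ B sh s t))) =
        ε (B (TensorProduct.rid K 𝕋 (ε.lTensor 𝕋 s)) (TensorProduct.rid K 𝕋 (ε.lTensor 𝕋 t))) := by
    intro s t
    induction s using TensorProduct.induction_on with
    | zero => simp
    | add s s' hs hs' => simp only [map_add, LinearMap.add_apply, hs, hs']
    | tmul a b =>
      induction t using TensorProduct.induction_on with
      | zero => simp
      | add t t' ht ht' => simp only [map_add, ht, ht']
      | tmul c d => simp [hsh.counit_apply hε]; ring
  have h := congrArg ε (congrArg (TensorProduct.lid K 𝕋) (hΔ.rTensor_counit hε (B u v)))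
  rw [hB, map_add, map_add, map_add, counit_lTensor, counit_map₂, hΔ.rTensor_counit hε,
    hΔ.lTensor_counit hε, hΔ.lTensor_counit hε] at h
  simpa using h

theorem map_leibnizDefect (hsh : IsShuffle sh)
    (hB : ∀ u v, Δ (B u v) = (B.flip v).lTensor 𝕋 (Δ u) + map₂ B sh (Δ u) (Δ v)) (w u v : 𝕋) :
    Δ (leibnizDefect sh B w u v) = map₂ sh (leibnizDefect sh B w) (Δ u) (Δ v) +
      (map₂ B sh (map₂ sh sh (Δ u) (Δ v)) (Δ w) - map₂ sh sh (map₂ B sh (Δ u) (Δ w)) (Δ v) -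
        map₂ sh sh (Δ u) (map₂ B sh (Δ v) (Δ w))) := by
  rw [← lTensor_map₂_sub_map₂_lTensor, leibnizDefect_apply]
  simp only [map_sub, hB, hΔ.map_shuffle hsh, map_add, LinearMap.add_apply]
  abel

section

variable (hπ : IsDegreeOneProjection π)
include hπ

theorem projMul_map_one (L : 𝕋 →ₗ[K] 𝕋) : projMul π L (Δ 1) = 0 := by
  simp [hΔ.map_one, hπ.map_one]

theorem projMul_map_ι_mul (hε : IsCounit ε) (L : 𝕋 →ₗ[K] 𝕋) (x : V) (u : 𝕋) :
    projMul π L (Δ (ι K x * u)) = ι K x * L u := by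
  have h : ∀ t, projMul π L ((LinearMap.mulLeft K (ι K x)).rTensor 𝕋 t) =
      ι K x * L (TensorProduct.lid K 𝕋 (ε.rTensor 𝕋 t)) := fun t => by
    induction t using TensorProduct.induction_on with
    | zero => simp
    | add t t' ht ht' => simp only [map_add, ht, ht', mul_add]
    | tmul a b => simp [hπ.map_ι_mul hε]
  simp [hΔ.map_ι_mul, hπ.map_one, h, hΔ.rTensor_counit hε]

theorem projMul_id_map (hε : IsCounit ε) (z : 𝕋) :
    projMul π LinearMap.id (Δ z) = z - ε z • 1 := by
  induction z using induction_ι_mul with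
  | one => simp [hΔ.projMul_map_one hπ, hε.map_one]
  | ι_mul x u _ => simp [hΔ.projMul_map_ι_mul hπ hε, hε.map_ι_mul]
  | add u v hu hv => simp only [map_add, hu, hv, add_smul]; abel
  | smul r u hu => simp [hu, smul_sub, smul_smul]

theorem eq_zero_of_eq_projMul (hε : IsCounit ε) {D : 𝕋 →ₗ[K] 𝕋 →ₗ[K] 𝕋}
    (hD : ∀ u v, D u v = projMul π (D.flip v) (Δ u) + projMul π (D u) (Δ v)) : D = 0 := by
  ext1 u
  induction u using induction_ι_mul with
  | one =>
    ext1 v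
    induction v using induction_ι_mul with
    | one => simp [hD 1 1, hΔ.projMul_map_one hπ]
    | ι_mul y v ihv =>
      simp_all [hD 1 (ι K y * v), hΔ.projMul_map_one hπ, hΔ.projMul_map_ι_mul hπ hε]
    | add v v' hv hv' => simp [hv, hv']
    | smul r v hv => simp [hv]
  | ι_mul x u ihu =>
    ext1 v
    induction v using induction_ι_mul with
    | one => simp_all [hD _ 1, hΔ.projMul_map_one hπ, hΔ.projMul_map_ι_mul hπ hε]
    | ι_mul y v ihv => simp_all [hD (ι K x * u) (ι K y * v), hΔ.projMul_map_ι_mul hπ hε]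
    | add v v' hv hv' => simp [hv, hv']
    | smul r v hv => simp [hv]
  | add u u' hu hu' => simp [hu, hu']
  | smul r u hu => simp [hu]

theorem projMul_id_map₂_shuffle (hε : IsCounit ε) (hsh : IsShuffle sh)
    (D : 𝕋 →ₗ[K] 𝕋 →ₗ[K] 𝕋) (u v : 𝕋) :
    projMul π LinearMap.id (map₂ sh D (Δ u) (Δ v)) =
      projMul π (D.flip v) (Δ u) + projMul π (D u) (Δ v) := by
  have h : ∀ s t : 𝕋 ⊗[K] 𝕋, projMul π LinearMap.id (map₂ sh D s t) =
      projMul π (D.flip (TensorProduct.lid K 𝕋 (ε.rTensor 𝕋 t))) s +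
        projMul π (D (TensorProduct.lid K 𝕋 (ε.rTensor 𝕋 s))) t := by
    intro s t
    induction s using TensorProduct.induction_on with
    | zero => simp
    | add s s' hs hs' =>
      simp only [map_add, LinearMap.add_apply, projMul_add, hs, hs']
      abel
    | tmul a b =>
      induction t using TensorProduct.induction_on with
      | zero => simp
      | add t t' ht ht' =>
        simp only [map_add, LinearMap.add_apply, projMul_add, ht, ht']
        abel
      | tmul c d => simp [hsh.π_apply hπ hε, add_mul, add_comm]
  rw [h, hΔ.rTensor_counit hε, hΔ.rTensor_counit hε]
  simp

theorem leibnizDefect_eq_zero (hε : IsCounit ε) (hsh : IsShuffle sh)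
    (hB : ∀ u v, Δ (B u v) = (B.flip v).lTensor 𝕋 (Δ u) + map₂ B sh (Δ u) (Δ v))
    (hcond : ∀ u v w, π (B (sh u v) w) = ε u • π (B v w) + ε v • π (B u w)) (w : 𝕋) :
    leibnizDefect sh B w = 0 := by
  have hεB := hΔ.counit_eq_zero_of_comul_eq hε hsh hB
  refine hΔ.eq_zero_of_eq_projMul hπ hε fun u v => ?_
  have hεD : ε (leibnizDefect sh B w u v) = 0 := by simp [hsh.counit_apply hε, hεB]
  calc leibnizDefect sh B w u v
      _ = projMul π LinearMap.id (Δ (leibnizDefect sh B w u v)) := by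
        rw [hΔ.projMul_id_map hπ hε, hεD, zero_smul, sub_zero]
      _ = _ := by
        rw [hΔ.map_leibnizDefect hsh hB, map_add, map_sub, map_sub,
          hsh.projMul_id_map₂_leibniz hπ hε hεB hcond, hΔ.projMul_id_map₂_shuffle hπ hε hsh]
        abel

end

end IsDeconcatenation

end TensorAlgebra

open TensorAlgebra in
theorem leibniz_iff_varpi_cond_general {K V : Type*} [Field K]
    [AddCommGroup V] [Module K V]
    (Δ : TensorAlgebra K V →ₗ[K] TensorAlgebra K V ⊗[K] TensorAlgebra K V)
    (hΔone : Δ 1 = 1 ⊗ₜ[K] 1)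
    (hΔcons : ∀ (v : V) (u : TensorAlgebra K V),
      Δ (TensorAlgebra.ι K v * u) =
        1 ⊗ₜ[K] (TensorAlgebra.ι K v * u)
        + TensorProduct.map (LinearMap.mulLeft K (TensorAlgebra.ι K v))
            LinearMap.id (Δ u))
    (sh : TensorAlgebra K V →ₗ[K] TensorAlgebra K V →ₗ[K] TensorAlgebra K V)
    (hshone : ∀ u, sh 1 u = u) (hshone' : ∀ u, sh u 1 = u)
    (hshcons : ∀ (x y : V) (u w : TensorAlgebra K V),
      sh (TensorAlgebra.ι K x * u) (TensorAlgebra.ι K y * w) =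
        TensorAlgebra.ι K x * sh u (TensorAlgebra.ι K y * w)
        + TensorAlgebra.ι K y * sh (TensorAlgebra.ι K x * u) w)
    (π : TensorAlgebra K V →ₗ[K] V)
    (hπone : π 1 = 0) (hπι : ∀ v : V, π (TensorAlgebra.ι K v) = v)
    (hπtwo : ∀ (v w : V) (u : TensorAlgebra K V),
      π (TensorAlgebra.ι K v * (TensorAlgebra.ι K w * u)) = 0)
    (ε : TensorAlgebra K V →ₗ[K] K)
    (hεone : ε 1 = 1)
    (hεcons : ∀ (v : V) (u : TensorAlgebra K V), ε (TensorAlgebra.ι K v * u) = 0)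
    (ϖ : TensorAlgebra K V ⊗[K] TensorAlgebra K V →ₗ[K] V)
    (B : TensorAlgebra K V →ₗ[K] TensorAlgebra K V →ₗ[K] TensorAlgebra K V)
    (hBπ : ∀ u v : TensorAlgebra K V, π (B u v) = ϖ (u ⊗ₜ[K] v))
    (hBΔ : ∀ u v : TensorAlgebra K V, Δ (B u v) =
      TensorProduct.map LinearMap.id (B.flip v) (Δ u)
      + TensorProduct.map (TensorProduct.lift B) (TensorProduct.lift sh)
          (TensorProduct.tensorTensorTensorComm K (TensorAlgebra K V)
            (TensorAlgebra K V) (TensorAlgebra K V) (TensorAlgebra K V)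
            (Δ u ⊗ₜ[K] Δ v))) :
    (∀ u v w : TensorAlgebra K V,
        B (sh u v) w = sh (B u w) v + sh u (B v w)) ↔
      (∀ u v w : TensorAlgebra K V,
        ϖ (sh u v ⊗ₜ[K] w) = ε u • ϖ (v ⊗ₜ[K] w) + ε v • ϖ (u ⊗ₜ[K] w)) := by
  have hΔ : IsDeconcatenation Δ := ⟨hΔone, hΔcons⟩
  have hsh : IsShuffle sh := ⟨hshone, hshone', hshcons⟩
  have hπ : IsDegreeOneProjection π := ⟨hπone, hπι, hπtwo⟩
  have hε : IsCounit ε := ⟨hεone, hεcons⟩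
  have hB : ∀ u v, Δ (B u v) = (B.flip v).lTensor _ (Δ u) + map₂ B sh (Δ u) (Δ v) := by
    intro u v
    rw [hBΔ, map_lift_lift_tensorTensorTensorComm]
    rfl
  have hεB := hΔ.counit_eq_zero_of_comul_eq hε hsh hB
  simp only [← hBπ]
  constructor
  · intro h u v w
    rw [h, map_add, hsh.π_apply hπ hε, hsh.π_apply hπ hε, hεB, hεB]
    simp [add_comm]
  · intro hcond u v w
    have := congr($(hΔ.leibnizDefect_eq_zero hπ hε hsh hB hcond w) u v)
    rwa [leibnizDefect_apply, LinearMap.zero_apply, LinearMap.zero_apply, sub_sub,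
      sub_eq_zero] at this

/-- With `•` defined from `ϖ` (characterized by `π ∘ • = ϖ` and the coproduct
identity), the Leibniz identity `(u⧢v)•w = (u•w)⧢v + u⧢(v•w)` holds for all
`u,v,w` iff `ϖ((u⧢v)⊗w) = ε(u)ϖ(v⊗w) + ε(v)ϖ(u⊗w)` for all `u,v,w`. -/
theorem leibniz_iff_varpi_cond {K V : Type*} [Field K] [CharZero K]
    [AddCommGroup V] [Module K V]
    (Δ : TensorAlgebra K V →ₗ[K] TensorAlgebra K V ⊗[K] TensorAlgebra K V)
    (hΔone : Δ 1 = 1 ⊗ₜ[K] 1)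
    (hΔcons : ∀ (v : V) (u : TensorAlgebra K V),
      Δ (TensorAlgebra.ι K v * u) =
        1 ⊗ₜ[K] (TensorAlgebra.ι K v * u)
        + TensorProduct.map (LinearMap.mulLeft K (TensorAlgebra.ι K v))
            LinearMap.id (Δ u))
    (sh : TensorAlgebra K V →ₗ[K] TensorAlgebra K V →ₗ[K] TensorAlgebra K V)
    (hshone : ∀ u, sh 1 u = u) (hshone' : ∀ u, sh u 1 = u)
    (hshcons : ∀ (x y : V) (u w : TensorAlgebra K V),
      sh (TensorAlgebra.ι K x * u) (TensorAlgebra.ι K y * w) =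
        TensorAlgebra.ι K x * sh u (TensorAlgebra.ι K y * w)
        + TensorAlgebra.ι K y * sh (TensorAlgebra.ι K x * u) w)
    (π : TensorAlgebra K V →ₗ[K] V)
    (hπone : π 1 = 0) (hπι : ∀ v : V, π (TensorAlgebra.ι K v) = v)
    (hπtwo : ∀ (v w : V) (u : TensorAlgebra K V),
      π (TensorAlgebra.ι K v * (TensorAlgebra.ι K w * u)) = 0)
    (ε : TensorAlgebra K V →ₗ[K] K)
    (hεone : ε 1 = 1)
    (hεcons : ∀ (v : V) (u : TensorAlgebra K V), ε (TensorAlgebra.ι K v * u) = 0)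
    (ϖ : TensorAlgebra K V ⊗[K] TensorAlgebra K V →ₗ[K] V)
    (B : TensorAlgebra K V →ₗ[K] TensorAlgebra K V →ₗ[K] TensorAlgebra K V)
    (hBπ : ∀ u v : TensorAlgebra K V, π (B u v) = ϖ (u ⊗ₜ[K] v))
    (hBΔ : ∀ u v : TensorAlgebra K V, Δ (B u v) =
      TensorProduct.map LinearMap.id (B.flip v) (Δ u)
      + TensorProduct.map (TensorProduct.lift B) (TensorProduct.lift sh)
          (TensorProduct.tensorTensorTensorComm K (TensorAlgebra K V)
            (TensorAlgebra K V) (TensorAlgebra K V) (TensorAlgebra K V)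
            (Δ u ⊗ₜ[K] Δ v))) :
    (∀ u v w : TensorAlgebra K V,
        B (sh u v) w = sh (B u w) v + sh u (B v w)) ↔
      (∀ u v w : TensorAlgebra K V,
        ϖ (sh u v ⊗ₜ[K] w) = ε u • ϖ (v ⊗ₜ[K] w) + ε v • ϖ (u ⊗ₜ[K] w)) :=
  leibniz_iff_varpi_cond_general Δ hΔone hΔcons sh hshone hshone' hshcons π hπone hπι hπtwo ε hεone
    hεcons ϖ B hBπ hBΔ
end

section
/- Let ϖ : T(V)⊗T(V) → V satisfy ϖ((u⧢v)⊗w) = ε(u)ϖ(v⊗w) + ε(v)ϖ(u⊗w), and let • be the associated product. Then (T(V),⧢,•,Δ) is a Com-PreLie bialgebra if and only if ϖ(u•v⊗w) - ϖ(u⊗v•w) = ϖ(u•w⊗v) - ϖ(u⊗w•v) for all u,v,w ∈ T(V). -/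
open TensorProduct

set_option linter.unusedSectionVars false
set_option synthInstance.maxHeartbeats 400000
set_option maxHeartbeats 1000000

namespace CPL

structure Ctx (K V : Type*) [Field K] [CharZero K] [AddCommGroup V] [Module K V] where
  Δ : TensorAlgebra K V →ₗ[K] TensorAlgebra K V ⊗[K] TensorAlgebra K V
  hΔone : Δ 1 = 1 ⊗ₜ[K] 1
  hΔcons : ∀ (v : V) (u : TensorAlgebra K V),
      Δ (TensorAlgebra.ι K v * u) =
        1 ⊗ₜ[K] (TensorAlgebra.ι K v * u)
        + TensorProduct.map (LinearMap.mulLeft K (TensorAlgebra.ι K v))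
            LinearMap.id (Δ u)
  sh : TensorAlgebra K V →ₗ[K] TensorAlgebra K V →ₗ[K] TensorAlgebra K V
  hshone : ∀ u, sh 1 u = u
  hshone' : ∀ u, sh u 1 = u
  hshcons : ∀ (x y : V) (u w : TensorAlgebra K V),
      sh (TensorAlgebra.ι K x * u) (TensorAlgebra.ι K y * w) =
        TensorAlgebra.ι K x * sh u (TensorAlgebra.ι K y * w)
        + TensorAlgebra.ι K y * sh (TensorAlgebra.ι K x * u) w
  π : TensorAlgebra K V →ₗ[K] V
  hπone : π 1 = 0
  hπι : ∀ v : V, π (TensorAlgebra.ι K v) = v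
  hπtwo : ∀ (v w : V) (u : TensorAlgebra K V),
      π (TensorAlgebra.ι K v * (TensorAlgebra.ι K w * u)) = 0
  ε : TensorAlgebra K V →ₗ[K] K
  hεone : ε 1 = 1
  hεcons : ∀ (v : V) (u : TensorAlgebra K V), ε (TensorAlgebra.ι K v * u) = 0
  ϖ : TensorAlgebra K V ⊗[K] TensorAlgebra K V →ₗ[K] V
  hEQ2 : ∀ u v w : TensorAlgebra K V,
      ϖ (sh u v ⊗ₜ[K] w) = ε u • ϖ (v ⊗ₜ[K] w) + ε v • ϖ (u ⊗ₜ[K] w)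
  B : TensorAlgebra K V →ₗ[K] TensorAlgebra K V →ₗ[K] TensorAlgebra K V
  hBπ : ∀ u v : TensorAlgebra K V, π (B u v) = ϖ (u ⊗ₜ[K] v)
  hBΔ : ∀ u v : TensorAlgebra K V, Δ (B u v) =
      TensorProduct.map LinearMap.id (B.flip v) (Δ u)
      + TensorProduct.map (TensorProduct.lift B) (TensorProduct.lift sh)
          (TensorProduct.tensorTensorTensorComm K (TensorAlgebra K V)
            (TensorAlgebra K V) (TensorAlgebra K V) (TensorAlgebra K V)
            (Δ u ⊗ₜ[K] Δ v))

namespace Ctx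

variable {K V : Type*} [Field K] [CharZero K] [AddCommGroup V] [Module K V]

local notation "T" => TensorAlgebra K V
local notation "ν" => TensorAlgebra.ι K
local notation "τ" => TensorProduct.tensorTensorTensorComm K (TensorAlgebra K V)
            (TensorAlgebra K V) (TensorAlgebra K V) (TensorAlgebra K V)

/-- monomials span -/
theorem span_mono_top :
    Submodule.span K (Set.range fun l : List V => (l.map (ν)).prod) = (⊤ : Submodule K T) := by
  rw [eq_top_iff]
  rintro a -
  set S : Set T := Set.range fun l : List V => (l.map (ν)).prod with hS
  have hmem : ∀ l : List V, (l.map (ν)).prod ∈ Submodule.span K S :=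
    fun l => Submodule.subset_span ⟨l, rfl⟩
  have hmul : ∀ a ∈ Submodule.span K S, ∀ b ∈ Submodule.span K S,
      a * b ∈ Submodule.span K S := by
    intro a ha b hb
    induction ha using Submodule.span_induction with
    | mem x hx =>
      obtain ⟨l₁, rfl⟩ := hx
      induction hb using Submodule.span_induction with
      | mem y hy =>
        obtain ⟨l₂, rfl⟩ := hy
        have : (l₁.map (ν)).prod * (l₂.map (ν)).prod = ((l₁ ++ l₂).map (ν)).prod := by
          rw [List.map_append, List.prod_append]
        rw [this]; exact hmem _
      | zero => simp
      | add y z _ _ h1 h2 => rw [mul_add]; exact Submodule.add_mem _ h1 h2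
      | smul c y _ h1 => rw [mul_smul_comm]; exact Submodule.smul_mem _ _ h1
    | zero => simp
    | add x y _ _ h1 h2 => rw [add_mul]; exact Submodule.add_mem _ h1 h2
    | smul c x _ h1 => rw [smul_mul_assoc]; exact Submodule.smul_mem _ _ h1
  induction a using TensorAlgebra.induction with
  | algebraMap r =>
    have h1 : (1 : T) ∈ Submodule.span K S := by simpa using hmem []
    have : (algebraMap K T) r = r • (1 : T) := by rw [Algebra.algebraMap_eq_smul_one]
    rw [this]; exact Submodule.smul_mem _ _ h1
  | ι x => simpa using hmem [x]
  | mul a b ha hb => exact hmul a ha b hb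
  | add a b ha hb => exact Submodule.add_mem _ ha hb

theorem cons_ind {p : T → Prop} (h1 : p 1)
    (hc : ∀ (x : V) (a : T), p a → p (ν x * a))
    (h0 : p 0) (hadd : ∀ a b, p a → p b → p (a + b))
    (hsmul : ∀ (c : K) (a : T), p a → p (c • a)) : ∀ a, p a := by
  intro a
  have ha : a ∈ Submodule.span K (Set.range fun l : List V => (l.map (ν)).prod) := by
    rw [span_mono_top]; trivial
  induction ha using Submodule.span_induction with
  | mem x hx =>
    obtain ⟨l, rfl⟩ := hx
    induction l with
    | nil => simpa using h1
    | cons x l ih => simpa using hc x _ ih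
  | zero => exact h0
  | add x y _ _ hx hy => exact hadd _ _ hx hy
  | smul c x _ hx => exact hsmul _ _ hx

variable (C : Ctx K V)

theorem eps_cons' (x : V) (a : T) : C.ε (ν x * a) = 0 := C.hεcons x a

/-- left counit law -/
theorem counitL : ∀ a : T, TensorProduct.lid K T (TensorProduct.map C.ε LinearMap.id (C.Δ a)) = a := by
  apply cons_ind
  · rw [C.hΔone]; simp [C.hεone]
  · intro x a ih
    rw [C.hΔcons]
    have h2 : ∀ t : T ⊗[K] T,
        TensorProduct.map C.ε LinearMap.id
          (TensorProduct.map (LinearMap.mulLeft K (ν x)) LinearMap.id t) = 0 := by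
      intro t
      induction t with
      | zero => simp
      | tmul a b => simp [C.hεcons]
      | add s t hs ht => simp [hs, ht]
    simp [h2, C.hεone]
  · simp
  · intro a b ha hb; simp [ha, hb]
  · intro c a ha; simp [ha]

/-- right counit law -/
theorem counitR : ∀ a : T, TensorProduct.rid K T (TensorProduct.map LinearMap.id C.ε (C.Δ a)) = a := by
  apply cons_ind
  · rw [C.hΔone]; simp [C.hεone]
  · intro x a ih
    rw [C.hΔcons]
    have h2 : ∀ t : T ⊗[K] T,
        TensorProduct.rid K T (TensorProduct.map LinearMap.id C.ε
          (TensorProduct.map (LinearMap.mulLeft K (ν x)) LinearMap.id t)) =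
        ν x * TensorProduct.rid K T (TensorProduct.map LinearMap.id C.ε t) := by
      intro t
      induction t with
      | zero => simp
      | tmul a b => simp [mul_smul_comm]
      | add s t hs ht => simp [hs, ht, mul_add]
    simp [h2, ih, C.hεcons]
  · simp
  · intro a b ha hb; simp [ha, hb]
  · intro c a ha; simp [ha]

theorem pi_cons (x : V) : ∀ a : T, C.π (ν x * a) = C.ε a • x := by
  apply cons_ind
  · simp [C.hπι, C.hεone]
  · intro y a _; simp [C.hπtwo, C.hεcons]
  · simp [C.hπone]
  · intro a b ha hb; simp [mul_add, ha, hb, add_smul]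
  · intro c a ha; simp [mul_smul_comm, ha, smul_smul, mul_comm]

/-- the "cons" map `x ⊗ u ↦ ι x * u` -/
noncomputable def Mm : V ⊗[K] T →ₗ[K] T :=
  TensorProduct.lift ((LinearMap.mul K T).comp (TensorAlgebra.ι K))

@[simp] theorem Mm_tmul (x : V) (a : T) : (Mm : V ⊗[K] T →ₗ[K] T) (x ⊗ₜ[K] a) = ν x * a := rfl

/-- the "decons" map `(π ⊗ id) ∘ Δ` -/
noncomputable def Lm : T →ₗ[K] V ⊗[K] T :=
  (TensorProduct.map C.π LinearMap.id) ∘ₗ C.Δ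

theorem Lm_one : C.Lm (1 : T) = 0 := by
  simp [Lm, C.hΔone, C.hπone]

theorem Lm_cons (x : V) (a : T) : C.Lm (ν x * a) = x ⊗ₜ[K] a := by
  have key : ∀ t : T ⊗[K] T,
      TensorProduct.map C.π LinearMap.id
        (TensorProduct.map (LinearMap.mulLeft K (ν x)) LinearMap.id t)
      = x ⊗ₜ[K] (TensorProduct.lid K T (TensorProduct.map C.ε LinearMap.id t)) := by
    intro t
    induction t with
    | zero => simp
    | tmul a b =>
      simp only [TensorProduct.map_tmul, LinearMap.mulLeft_apply, LinearMap.id_coe, id_eq,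
        C.pi_cons, TensorProduct.lid_tmul]
      rw [TensorProduct.smul_tmul]
    | add s t hs ht => simp [hs, ht, tmul_add]
  simp [Lm, C.hΔcons, C.hπone, key, C.counitL]

theorem recon : ∀ a : T, C.ε a • (1 : T) + Mm (C.Lm a) = a := by
  apply cons_ind
  · simp [C.hεone, C.Lm_one]
  · intro x a _; simp [C.hεcons, C.Lm_cons]
  · simp
  · intro a b ha hb
    calc C.ε (a + b) • (1:T) + Mm (C.Lm (a+b))
        = (C.ε a • (1:T) + Mm (C.Lm a)) + (C.ε b • (1:T) + Mm (C.Lm b)) := by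
          simp [add_smul]; abel
      _ = a + b := by rw [ha, hb]
  · intro c a ha
    calc C.ε (c • a) • (1:T) + Mm (C.Lm (c • a)) = c • (C.ε a • (1:T) + Mm (C.Lm a)) := by
          simp [smul_smul]
      _ = c • a := by rw [ha]

theorem eq_of (a b : T) (he : C.ε a = C.ε b) (hl : C.Lm a = C.Lm b) : a = b := by
  have ha := C.recon a
  have hb := C.recon b
  rw [← ha, ← hb, he, hl]

theorem pi_one0 (w : T) : C.ϖ ((1 : T) ⊗ₜ[K] w) = 0 := by
  have h := C.hEQ2 1 1 w
  rw [C.hshone, C.hεone, one_smul] at h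
  have h2 : C.ϖ ((1:T) ⊗ₜ[K] w) + 0 = C.ϖ ((1:T) ⊗ₜ[K] w) + C.ϖ ((1:T) ⊗ₜ[K] w) := by
    rw [add_zero]; exact h
  exact (add_left_cancel h2).symm

/-! ### bilinear gadgets -/

noncomputable def Phi (s t : T ⊗[K] T) : V ⊗[K] T :=
  TensorProduct.map C.ϖ (TensorProduct.lift C.sh) (τ (s ⊗ₜ[K] t))

noncomputable def Sw2 (s t : T ⊗[K] T) : T ⊗[K] T :=
  TensorProduct.map (TensorProduct.lift C.B) (TensorProduct.lift C.sh) (τ (s ⊗ₜ[K] t))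

noncomputable def Sh2 (s t : T ⊗[K] T) : T ⊗[K] T :=
  TensorProduct.map (TensorProduct.lift C.sh) (TensorProduct.lift C.sh) (τ (s ⊗ₜ[K] t))

@[simp] theorem Phi_tmul (a b c d : T) :
    C.Phi (a ⊗ₜ[K] b) (c ⊗ₜ[K] d) = C.ϖ (a ⊗ₜ[K] c) ⊗ₜ[K] C.sh b d := by
  simp [Phi]

@[simp] theorem Sw2_tmul (a b c d : T) :
    C.Sw2 (a ⊗ₜ[K] b) (c ⊗ₜ[K] d) = C.B a c ⊗ₜ[K] C.sh b d := by
  simp [Sw2]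

@[simp] theorem Sh2_tmul (a b c d : T) :
    C.Sh2 (a ⊗ₜ[K] b) (c ⊗ₜ[K] d) = C.sh a c ⊗ₜ[K] C.sh b d := by
  simp [Sh2]

@[simp] theorem Phi_add_left (s s' t : T ⊗[K] T) :
    C.Phi (s + s') t = C.Phi s t + C.Phi s' t := by simp [Phi, add_tmul]
@[simp] theorem Phi_add_right (s t t' : T ⊗[K] T) :
    C.Phi s (t + t') = C.Phi s t + C.Phi s t' := by simp [Phi, tmul_add]
@[simp] theorem Phi_smul_left (c : K) (s t : T ⊗[K] T) :
    C.Phi (c • s) t = c • C.Phi s t := by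
  simp only [Phi, ← smul_tmul', map_smul]
@[simp] theorem Phi_smul_right (c : K) (s t : T ⊗[K] T) :
    C.Phi s (c • t) = c • C.Phi s t := by simp [Phi, tmul_smul]
@[simp] theorem Phi_zero_left (t : T ⊗[K] T) : C.Phi 0 t = 0 := by simp [Phi]
@[simp] theorem Phi_zero_right (s : T ⊗[K] T) : C.Phi s 0 = 0 := by simp [Phi]

@[simp] theorem Sw2_add_left (s s' t : T ⊗[K] T) :
    C.Sw2 (s + s') t = C.Sw2 s t + C.Sw2 s' t := by simp [Sw2, add_tmul]
@[simp] theorem Sw2_add_right (s t t' : T ⊗[K] T) :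
    C.Sw2 s (t + t') = C.Sw2 s t + C.Sw2 s t' := by simp [Sw2, tmul_add]
@[simp] theorem Sw2_smul_left (c : K) (s t : T ⊗[K] T) :
    C.Sw2 (c • s) t = c • C.Sw2 s t := by
  simp only [Sw2, ← smul_tmul', map_smul]
@[simp] theorem Sw2_smul_right (c : K) (s t : T ⊗[K] T) :
    C.Sw2 s (c • t) = c • C.Sw2 s t := by simp [Sw2, tmul_smul]
@[simp] theorem Sw2_zero_left (t : T ⊗[K] T) : C.Sw2 0 t = 0 := by simp [Sw2]
@[simp] theorem Sw2_zero_right (s : T ⊗[K] T) : C.Sw2 s 0 = 0 := by simp [Sw2]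

@[simp] theorem Sh2_add_left (s s' t : T ⊗[K] T) :
    C.Sh2 (s + s') t = C.Sh2 s t + C.Sh2 s' t := by simp [Sh2, add_tmul]
@[simp] theorem Sh2_add_right (s t t' : T ⊗[K] T) :
    C.Sh2 s (t + t') = C.Sh2 s t + C.Sh2 s t' := by simp [Sh2, tmul_add]
@[simp] theorem Sh2_smul_left (c : K) (s t : T ⊗[K] T) :
    C.Sh2 (c • s) t = c • C.Sh2 s t := by
  simp only [Sh2, ← smul_tmul', map_smul]
@[simp] theorem Sh2_smul_right (c : K) (s t : T ⊗[K] T) :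
    C.Sh2 s (c • t) = c • C.Sh2 s t := by simp [Sh2, tmul_smul]
@[simp] theorem Sh2_zero_left (t : T ⊗[K] T) : C.Sh2 0 t = 0 := by simp [Sh2]
@[simp] theorem Sh2_zero_right (s : T ⊗[K] T) : C.Sh2 s 0 = 0 := by simp [Sh2]

/-- `Δ (B u v)` restated -/
theorem Delta_B (u v : T) :
    C.Δ (C.B u v) = TensorProduct.map LinearMap.id ((C.B).flip v) (C.Δ u)
      + C.Sw2 (C.Δ u) (C.Δ v) := C.hBΔ u v

theorem pi_liftB : ∀ s : T ⊗[K] T, C.π (TensorProduct.lift C.B s) = C.ϖ s := by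
  intro s
  induction s with
  | zero => simp
  | tmul a b => simp [C.hBπ]
  | add s t hs ht => simp [hs, ht]

/-- L of B -/
theorem Lm_B (u v : T) :
    C.Lm (C.B u v) = TensorProduct.map LinearMap.id ((C.B).flip v) (C.Lm u)
      + C.Phi (C.Δ u) (C.Δ v) := by
  have h1 : ∀ s : T ⊗[K] T,
      TensorProduct.map C.π LinearMap.id (TensorProduct.map LinearMap.id ((C.B).flip v) s)
      = TensorProduct.map LinearMap.id ((C.B).flip v) (TensorProduct.map C.π LinearMap.id s) := by
    intro s
    induction s with
    | zero => simp
    | tmul a b => simp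
    | add s t hs ht => simp [hs, ht]
  have h2 : ∀ X : (T ⊗[K] T) ⊗[K] (T ⊗[K] T),
      TensorProduct.map C.π LinearMap.id
        (TensorProduct.map (TensorProduct.lift C.B) (TensorProduct.lift C.sh) X)
      = TensorProduct.map C.ϖ (TensorProduct.lift C.sh) X := by
    intro X
    induction X with
    | zero => simp
    | tmul s t => simp [C.pi_liftB]
    | add s t hs ht => simp [hs, ht]
  simp only [Lm, LinearMap.comp_apply, Delta_B, map_add, h1, Sw2, h2, Phi]

/-- ε is multiplicative on shuffles -/
theorem eps_sh : ∀ u v : T, C.ε (C.sh u v) = C.ε u * C.ε v := by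
  apply cons_ind (p := fun u => ∀ v : T, C.ε (C.sh u v) = C.ε u * C.ε v)
  · intro v; rw [C.hshone, C.hεone, one_mul]
  · intro x a _
    apply cons_ind (p := fun v => C.ε (C.sh (ν x * a) v) = C.ε (ν x * a) * C.ε v)
    · rw [C.hshone', C.hεone, mul_one]
    · intro y b _; rw [C.hshcons]; simp [C.hεcons]
    · simp
    · intro v w hv hw; simp only [map_add, hv, hw, mul_add]
    · intro c v hv; simp only [map_smul, hv, smul_eq_mul]; ring
  · intro v; simp
  · intro a b ha hb v; simp only [map_add, LinearMap.add_apply, ha, hb, add_mul]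
  · intro c a ha v; simp only [map_smul, LinearMap.smul_apply, ha, smul_eq_mul]; ring

theorem sh_comm : ∀ u v : T, C.sh u v = C.sh v u := by
  apply cons_ind (p := fun u => ∀ v : T, C.sh u v = C.sh v u)
  · intro v; rw [C.hshone, C.hshone']
  · intro x a iha
    apply cons_ind (p := fun v => C.sh (ν x * a) v = C.sh v (ν x * a))
    · rw [C.hshone, C.hshone']
    · intro y b ihb
      rw [C.hshcons, C.hshcons, iha, ihb, add_comm]
    · simp
    · intro v w hv hw; simp only [map_add, LinearMap.add_apply, hv, hw]
    · intro c v hv; simp only [map_smul, LinearMap.smul_apply, hv]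
  · intro v; simp
  · intro a b ha hb v; simp only [map_add, LinearMap.add_apply, ha, hb]
  · intro c a ha v; simp only [map_smul, LinearMap.smul_apply, ha]

theorem sh_assoc : ∀ u v w : T, C.sh (C.sh u v) w = C.sh u (C.sh v w) := by
  apply cons_ind (p := fun u => ∀ v w : T, C.sh (C.sh u v) w = C.sh u (C.sh v w))
  · intro v w; rw [C.hshone, C.hshone]
  · intro x a iha
    apply cons_ind (p := fun v => ∀ w : T, C.sh (C.sh (ν x * a) v) w = C.sh (ν x * a) (C.sh v w))
    · intro w; rw [C.hshone', C.hshone]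
    · intro y b ihb
      apply cons_ind (p := fun w => C.sh (C.sh (ν x * a) (ν y * b)) w
          = C.sh (ν x * a) (C.sh (ν y * b) w))
      · rw [C.hshone', C.hshone']
      · intro z c ihc
        have e1 := C.hshcons x y a b
        have e2 := C.hshcons y z b c
        have lhs_eq : C.sh (C.sh (ν x * a) (ν y * b)) (ν z * c)
            = ν x * C.sh (C.sh a (ν y * b)) (ν z * c)
              + ν y * C.sh (C.sh (ν x * a) b) (ν z * c)
              + ν z * C.sh (C.sh (ν x * a) (ν y * b)) c := by
          rw [e1]
          simp only [map_add, LinearMap.add_apply]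
          rw [C.hshcons x z (C.sh a (ν y * b)) c, C.hshcons y z (C.sh (ν x * a) b) c]
          rw [mul_add]; abel
        have rhs_eq : C.sh (ν x * a) (C.sh (ν y * b) (ν z * c))
            = ν x * C.sh a (C.sh (ν y * b) (ν z * c))
              + ν y * C.sh (ν x * a) (C.sh b (ν z * c))
              + ν z * C.sh (ν x * a) (C.sh (ν y * b) c) := by
          rw [e2]
          simp only [map_add]
          rw [C.hshcons x y a (C.sh b (ν z * c)), C.hshcons x z a (C.sh (ν y * b) c)]
          rw [mul_add]; abel
        rw [lhs_eq, rhs_eq, iha, ihb, ihc]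
      · simp
      · intro w w' hw hw'; simp only [map_add, hw, hw']
      · intro c w hw; simp only [map_smul, hw]
    · intro w; simp
    · intro v v' hv hv' w; simp only [map_add, LinearMap.add_apply, hv, hv']
    · intro c v hv w; simp only [map_smul, LinearMap.smul_apply, hv]
  · intro v w; simp
  · intro a b ha hb v w; simp only [map_add, LinearMap.add_apply, ha, hb]
  · intro c a ha v w; simp only [map_smul, LinearMap.smul_apply, ha]

/-! ### collapse lemmas -/

theorem collapse_left {X : Type*} [AddCommGroup X] [Module K X] (Ψ : T →ₗ[K] X) (u : T) :
    TensorProduct.lift (((LinearMap.lsmul K X).comp C.ε).compl₂ Ψ) (C.Δ u) = Ψ u := by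
  have h : TensorProduct.lift (((LinearMap.lsmul K X).comp C.ε).compl₂ Ψ)
      = Ψ ∘ₗ (TensorProduct.lid K T).toLinearMap ∘ₗ TensorProduct.map C.ε LinearMap.id :=
    TensorProduct.ext' (fun p q => by simp)
  rw [h]
  simp only [LinearMap.comp_apply, LinearEquiv.coe_coe, C.counitL]

theorem collapse_right {X : Type*} [AddCommGroup X] [Module K X] (Ψ : T →ₗ[K] X) (u : T) :
    TensorProduct.lift ((((LinearMap.lsmul K X).comp C.ε).compl₂ Ψ).flip) (C.Δ u) = Ψ u := by
  have h : TensorProduct.lift ((((LinearMap.lsmul K X).comp C.ε).compl₂ Ψ).flip)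
      = Ψ ∘ₗ (TensorProduct.rid K T).toLinearMap ∘ₗ TensorProduct.map LinearMap.id C.ε :=
    TensorProduct.ext' (fun p q => by simp)
  rw [h]
  simp only [LinearMap.comp_apply, LinearEquiv.coe_coe, C.counitR]

/-! ### ε ∘ B = 0 -/

theorem eps_eps_delta (a : T) :
    LinearMap.mul' K K (TensorProduct.map C.ε C.ε (C.Δ a)) = C.ε a := by
  have h : ∀ t : T ⊗[K] T, LinearMap.mul' K K (TensorProduct.map C.ε C.ε t)
      = C.ε (TensorProduct.rid K T (TensorProduct.map LinearMap.id C.ε t)) := by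
    intro t
    induction t with
    | zero => simp
    | tmul p q => simp [mul_comm]
    | add s t hs ht => simp [hs, ht]
  rw [h, C.counitR]

theorem eps_B (u v : T) : C.ε (C.B u v) = 0 := by
  have key := congrArg (fun t => LinearMap.mul' K K (TensorProduct.map C.ε C.ε t)) (C.Delta_B u v)
  simp only [map_add] at key
  rw [C.eps_eps_delta] at key
  have h1 : LinearMap.mul' K K (TensorProduct.map C.ε C.ε
      (TensorProduct.map LinearMap.id ((C.B).flip v) (C.Δ u))) = C.ε (C.B u v) := by
    have h : ∀ s : T ⊗[K] T, LinearMap.mul' K K (TensorProduct.map C.ε C.ε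
        (TensorProduct.map LinearMap.id ((C.B).flip v) s))
        = TensorProduct.lift (((LinearMap.lsmul K K).comp C.ε).compl₂ (C.ε ∘ₗ ((C.B).flip v))) s := by
      intro s
      induction s with
      | zero => simp
      | tmul p q => simp
      | add s t hs ht => simp [hs, ht]
    rw [h, C.collapse_left]
    simp
  have h2 : LinearMap.mul' K K (TensorProduct.map C.ε C.ε (C.Sw2 (C.Δ u) (C.Δ v)))
      = C.ε (C.B u v) := by
    have h : ∀ s t : T ⊗[K] T, LinearMap.mul' K K (TensorProduct.map C.ε C.ε (C.Sw2 s t))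
        = C.ε (C.B (TensorProduct.rid K T (TensorProduct.map LinearMap.id C.ε s))
            (TensorProduct.rid K T (TensorProduct.map LinearMap.id C.ε t))) := by
      intro s t
      induction s with
      | zero => simp
      | tmul p p' =>
        induction t with
        | zero => simp
        | tmul q q' => simp [C.eps_sh, mul_comm, mul_left_comm, mul_assoc]
        | add t₁ t₂ h₁ h₂ => simp only [Sw2_add_right, map_add, LinearMap.add_apply, h₁, h₂]
      | add s₁ s₂ h₁ h₂ =>
        simp only [Sw2_add_left, map_add, LinearMap.add_apply, h₁, h₂]
    rw [h, C.counitR, C.counitR]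
  rw [h1, h2] at key
  -- key : ε (B u v) = ε (B u v) + ε (B u v)
  have h3 : C.ε (C.B u v) + 0 = C.ε (C.B u v) + C.ε (C.B u v) := by rw [add_zero]; exact key
  exact (add_left_cancel h3).symm

@[simp] theorem Phi_one_one (t : T ⊗[K] T) : C.Phi ((1 : T) ⊗ₜ[K] (1 : T)) t = 0 := by
  induction t with
  | zero => simp
  | tmul c d => simp [C.pi_one0]
  | add s t hs ht => simp [hs, ht]

theorem B_one (v : T) : C.B 1 v = 0 := by
  apply C.eq_of
  · simp [C.eps_B]
  · rw [C.Lm_B, C.Lm_one, C.hΔone]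
    simp

/-! ### Δ is multiplicative for sh -/

theorem Sh2_one_left : ∀ t : T ⊗[K] T, C.Sh2 ((1:T) ⊗ₜ[K] (1:T)) t = t := by
  intro t
  induction t with
  | zero => simp
  | tmul c d => simp [C.hshone]
  | add s t hs ht => simp [hs, ht]

theorem Sh2_one_right : ∀ s : T ⊗[K] T, C.Sh2 s ((1:T) ⊗ₜ[K] (1:T)) = s := by
  intro s
  induction s with
  | zero => simp
  | tmul c d => simp [C.hshone']
  | add s t hs ht => simp [hs, ht]

theorem Sh2_i (u v : T) : C.Sh2 ((1:T) ⊗ₜ[K] u) ((1:T) ⊗ₜ[K] v) = (1:T) ⊗ₜ[K] C.sh u v := by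
  simp [C.hshone]

theorem Sh2_ii (u : T) (y : V) : ∀ t : T ⊗[K] T,
    C.Sh2 ((1:T) ⊗ₜ[K] u) (TensorProduct.map (LinearMap.mulLeft K (ν y)) LinearMap.id t)
    = TensorProduct.map (LinearMap.mulLeft K (ν y)) LinearMap.id (C.Sh2 ((1:T) ⊗ₜ[K] u) t) := by
  intro t
  induction t with
  | zero => simp
  | tmul c d => simp [C.hshone]
  | add s t hs ht => simp [hs, ht]

theorem Sh2_iii (v : T) (x : V) : ∀ s : T ⊗[K] T,
    C.Sh2 (TensorProduct.map (LinearMap.mulLeft K (ν x)) LinearMap.id s) ((1:T) ⊗ₜ[K] v)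
    = TensorProduct.map (LinearMap.mulLeft K (ν x)) LinearMap.id (C.Sh2 s ((1:T) ⊗ₜ[K] v)) := by
  intro s
  induction s with
  | zero => simp
  | tmul c d => simp [C.hshone']
  | add s t hs ht => simp [hs, ht]

theorem Sh2_iv (x y : V) : ∀ s t : T ⊗[K] T,
    C.Sh2 (TensorProduct.map (LinearMap.mulLeft K (ν x)) LinearMap.id s)
          (TensorProduct.map (LinearMap.mulLeft K (ν y)) LinearMap.id t)
    = TensorProduct.map (LinearMap.mulLeft K (ν x)) LinearMap.id
        (C.Sh2 s (TensorProduct.map (LinearMap.mulLeft K (ν y)) LinearMap.id t))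
      + TensorProduct.map (LinearMap.mulLeft K (ν y)) LinearMap.id
        (C.Sh2 (TensorProduct.map (LinearMap.mulLeft K (ν x)) LinearMap.id s) t) := by
  intro s t
  induction s with
  | zero => simp
  | tmul p p' =>
    induction t with
    | zero => simp
    | tmul q q' => simp [C.hshcons, add_tmul]
    | add t₁ t₂ h₁ h₂ => simp only [map_add, Sh2_add_right, h₁, h₂]; abel
  | add s₁ s₂ h₁ h₂ => simp only [map_add, Sh2_add_left, h₁, h₂]; abel

theorem Delta_sh : ∀ u v : T, C.Δ (C.sh u v) = C.Sh2 (C.Δ u) (C.Δ v) := by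
  apply cons_ind (p := fun u => ∀ v : T, C.Δ (C.sh u v) = C.Sh2 (C.Δ u) (C.Δ v))
  · intro v; rw [C.hshone, C.hΔone, C.Sh2_one_left]
  · intro x a iha
    apply cons_ind (p := fun v => C.Δ (C.sh (ν x * a) v) = C.Sh2 (C.Δ (ν x * a)) (C.Δ v))
    · rw [C.hshone', C.hΔone, C.Sh2_one_right]
    · intro y b ihb
      rw [C.hshcons, map_add, C.hΔcons x (C.sh a (ν y * b)), C.hΔcons y (C.sh (ν x * a) b),
        iha, ihb, C.hΔcons x a, C.hΔcons y b]
      simp only [Sh2_add_left, Sh2_add_right, map_add, C.Sh2_i, C.Sh2_ii, C.Sh2_iii, C.Sh2_iv]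
      have hone : ((1:T) ⊗ₜ[K] (ν x * C.sh a (ν y * b))) + ((1:T) ⊗ₜ[K] (ν y * C.sh (ν x * a) b))
          = (1:T) ⊗ₜ[K] C.sh (ν x * a) (ν y * b) := by
        rw [← tmul_add, ← C.hshcons x y a b]
      rw [← hone]
      abel
    · simp
    · intro v w hv hw; simp only [map_add, hv, hw, Sh2_add_right]
    · intro c v hv; simp only [map_smul, hv, Sh2_smul_right]
  · intro v; simp
  · intro a b ha hb v; simp only [map_add, LinearMap.add_apply, ha, hb, Sh2_add_left]
  · intro c a ha v; simp only [map_smul, LinearMap.smul_apply, ha, Sh2_smul_left]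

/-! ### L of sh -/

theorem map_id_one_sh : ∀ w : V ⊗[K] T,
    TensorProduct.map LinearMap.id (C.sh 1) w = w := by
  intro w
  induction w with
  | zero => simp
  | tmul a b => simp [C.hshone]
  | add s t hs ht => simp [hs, ht]

theorem map_id_shflip_one : ∀ w : V ⊗[K] T,
    TensorProduct.map LinearMap.id ((C.sh).flip 1) w = w := by
  intro w
  induction w with
  | zero => simp
  | tmul a b => simp [C.hshone']
  | add s t hs ht => simp [hs, ht]

theorem Lm_sh : ∀ u v : T, C.Lm (C.sh u v)
    = TensorProduct.map LinearMap.id ((C.sh).flip v) (C.Lm u)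
      + TensorProduct.map LinearMap.id (C.sh u) (C.Lm v) := by
  apply cons_ind (p := fun u => ∀ v : T, C.Lm (C.sh u v)
    = TensorProduct.map LinearMap.id ((C.sh).flip v) (C.Lm u)
      + TensorProduct.map LinearMap.id (C.sh u) (C.Lm v))
  · intro v; rw [C.hshone, C.Lm_one, map_zero, zero_add, C.map_id_one_sh]
  · intro x a _
    apply cons_ind (p := fun v => C.Lm (C.sh (ν x * a) v)
      = TensorProduct.map LinearMap.id ((C.sh).flip v) (C.Lm (ν x * a))
        + TensorProduct.map LinearMap.id (C.sh (ν x * a)) (C.Lm v))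
    · rw [C.hshone', C.Lm_one, map_zero, add_zero, C.map_id_shflip_one]
    · intro y b _
      rw [C.hshcons, map_add, C.Lm_cons, C.Lm_cons, C.Lm_cons x a, C.Lm_cons y b]
      simp
    · simp
    · intro v v' hv hv'
      have e1 : (C.sh).flip (v + v') = (C.sh).flip v + (C.sh).flip v' := by
        ext q; simp
      simp only [map_add, hv, hv', e1, TensorProduct.map_add_right, LinearMap.add_apply]
      abel
    · intro c v hv
      have e1 : (C.sh).flip (c • v) = c • (C.sh).flip v := by ext q; simp
      simp only [map_smul, hv, e1, TensorProduct.map_smul_right, LinearMap.smul_apply, smul_add]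
  · intro v; simp
  · intro a b ha hb v
    have e1 : C.sh (a + b) = C.sh a + C.sh b := by rw [map_add]
    simp only [map_add, LinearMap.add_apply, ha, hb, e1, TensorProduct.map_add_right]
    abel
  · intro c a ha v
    have e1 : C.sh (c • a) = c • C.sh a := by rw [map_smul]
    simp only [map_smul, LinearMap.smul_apply, ha, e1, TensorProduct.map_smul_right, smul_add]

/-! ### gadgets for EQ2 + collapse -/

theorem lift_add'' {X : Type*} [AddCommGroup X] [Module K X] (F G : T →ₗ[K] T →ₗ[K] X) :
    TensorProduct.lift (F + G) = TensorProduct.lift F + TensorProduct.lift G :=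
  TensorProduct.ext' (fun p q => by simp)

theorem lift_smul'' {X : Type*} [AddCommGroup X] [Module K X] (c : K) (F : T →ₗ[K] T →ₗ[K] X) :
    TensorProduct.lift (c • F) = c • TensorProduct.lift F :=
  TensorProduct.ext' (fun p q => by simp)

noncomputable def PsiA (t r : T ⊗[K] T) : T →ₗ[K] V ⊗[K] T where
  toFun a := TensorProduct.map C.ϖ (TensorProduct.lift ((C.sh).comp (C.sh a))) (τ (t ⊗ₜ[K] r))
  map_add' a b := by
    have h1 : (C.sh).comp (C.sh (a + b)) = (C.sh).comp (C.sh a) + (C.sh).comp (C.sh b) := by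
      rw [map_add]; ext p q; simp
    rw [h1, lift_add'', TensorProduct.map_add_right, LinearMap.add_apply]
  map_smul' c a := by
    have h1 : (C.sh).comp (C.sh (c • a)) = c • (C.sh).comp (C.sh a) := by
      rw [map_smul]; ext p q; simp
    rw [h1, lift_smul'', TensorProduct.map_smul_right, LinearMap.smul_apply]
    rfl

@[simp] theorem PsiA_apply (t r : T ⊗[K] T) (a : T) :
    C.PsiA t r a = TensorProduct.map C.ϖ (TensorProduct.lift ((C.sh).comp (C.sh a))) (τ (t ⊗ₜ[K] r)) := rfl

noncomputable def PsiB (s r : T ⊗[K] T) : T →ₗ[K] V ⊗[K] T where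
  toFun b := TensorProduct.map C.ϖ (TensorProduct.lift ((C.sh).comp ((C.sh).flip b))) (τ (s ⊗ₜ[K] r))
  map_add' a b := by
    have h1 : (C.sh).comp ((C.sh).flip (a + b))
        = (C.sh).comp ((C.sh).flip a) + (C.sh).comp ((C.sh).flip b) := by
      ext p q; simp
    rw [h1, lift_add'', TensorProduct.map_add_right, LinearMap.add_apply]
  map_smul' c a := by
    have h1 : (C.sh).comp ((C.sh).flip (c • a)) = c • (C.sh).comp ((C.sh).flip a) := by
      ext p q; simp
    rw [h1, lift_smul'', TensorProduct.map_smul_right, LinearMap.smul_apply]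
    rfl

@[simp] theorem PsiB_apply (s r : T ⊗[K] T) (b : T) :
    C.PsiB s r b = TensorProduct.map C.ϖ (TensorProduct.lift ((C.sh).comp ((C.sh).flip b))) (τ (s ⊗ₜ[K] r)) := rfl

/-- lift-with-ε applied helper notation -/
noncomputable def lce {X : Type*} [AddCommGroup X] [Module K X] (Ψ : T →ₗ[K] X) :
    T ⊗[K] T →ₗ[K] X :=
  TensorProduct.lift (((LinearMap.lsmul K X).comp C.ε).compl₂ Ψ)

@[simp] theorem lce_tmul {X : Type*} [AddCommGroup X] [Module K X] (Ψ : T →ₗ[K] X) (p q : T) :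
    C.lce Ψ (p ⊗ₜ[K] q) = C.ε p • Ψ q := by simp [lce]

theorem lce_delta {X : Type*} [AddCommGroup X] [Module K X] (Ψ : T →ₗ[K] X) (u : T) :
    C.lce Ψ (C.Δ u) = Ψ u := C.collapse_left Ψ u

theorem lce_add {X : Type*} [AddCommGroup X] [Module K X] (Ψ Ψ' : T →ₗ[K] X) (s : T ⊗[K] T) :
    C.lce (Ψ + Ψ') s = C.lce Ψ s + C.lce Ψ' s := by
  have h : C.lce (Ψ + Ψ') = C.lce Ψ + C.lce Ψ' :=
    TensorProduct.ext' (fun p q => by simp [smul_add])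
  rw [h]; rfl

theorem PsiA_add_fst (t t' r : T ⊗[K] T) : C.PsiA (t + t') r = C.PsiA t r + C.PsiA t' r := by
  ext a; simp [add_tmul]

theorem PsiA_zero_fst (r : T ⊗[K] T) : C.PsiA 0 r = 0 := by
  ext a; simp

theorem PsiB_add_fst (s s' r : T ⊗[K] T) : C.PsiB (s + s') r = C.PsiB s r + C.PsiB s' r := by
  ext a; simp [add_tmul]

theorem PsiB_zero_fst (r : T ⊗[K] T) : C.PsiB 0 r = 0 := by
  ext a; simp

theorem lce_zero_map {X : Type*} [AddCommGroup X] [Module K X] (s : T ⊗[K] T) :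
    C.lce (0 : T →ₗ[K] X) s = 0 := by
  have h : C.lce (0 : T →ₗ[K] X) = 0 := TensorProduct.ext' (fun p q => by simp)
  rw [h]; rfl

/-- EQ2 split: key step -/
theorem stepA : ∀ s t r : T ⊗[K] T,
    C.Phi (C.Sh2 s t) r = C.lce (C.PsiA t r) s + C.lce (C.PsiB s r) t := by
  intro s t r
  induction s with
  | zero => simp [C.PsiB_zero_fst, C.lce_zero_map]
  | tmul a a' =>
    induction t with
    | zero => simp [C.PsiA_zero_fst, C.lce_zero_map]
    | tmul b b' =>
      induction r with
      | zero => simp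
      | tmul c c' =>
        simp only [Sh2_tmul, Phi_tmul, lce_tmul, PsiA_apply, PsiB_apply,
          TensorProduct.tensorTensorTensorComm_tmul, TensorProduct.map_tmul,
          TensorProduct.lift.tmul, LinearMap.comp_apply, LinearMap.flip_apply]
        rw [C.hEQ2 a b c, add_tmul, smul_tmul', smul_tmul']
      | add r₁ r₂ h₁ h₂ =>
        have eA : ∀ a'' : T, C.PsiA (b ⊗ₜ[K] b') (r₁ + r₂) a''
            = C.PsiA (b ⊗ₜ[K] b') r₁ a'' + C.PsiA (b ⊗ₜ[K] b') r₂ a'' := by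
          intro a''; simp [tmul_add]
        have eB : ∀ a'' : T, C.PsiB (a ⊗ₜ[K] a') (r₁ + r₂) a''
            = C.PsiB (a ⊗ₜ[K] a') r₁ a'' + C.PsiB (a ⊗ₜ[K] a') r₂ a'' := by
          intro a''; simp [tmul_add]
        have hA : C.PsiA (b ⊗ₜ[K] b') (r₁ + r₂)
            = C.PsiA (b ⊗ₜ[K] b') r₁ + C.PsiA (b ⊗ₜ[K] b') r₂ := by ext a''; exact eA a''
        have hB : C.PsiB (a ⊗ₜ[K] a') (r₁ + r₂)
            = C.PsiB (a ⊗ₜ[K] a') r₁ + C.PsiB (a ⊗ₜ[K] a') r₂ := by ext a''; exact eB a''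
        have hPhi : ∀ X : T ⊗[K] T, C.Phi X (r₁ + r₂) = C.Phi X r₁ + C.Phi X r₂ :=
          fun X => C.Phi_add_right X r₁ r₂
        rw [hPhi, h₁, h₂, hA, hB, C.lce_add, C.lce_add]
        abel
    | add t₁ t₂ h₁ h₂ =>
      rw [Sh2_add_right, Phi_add_left, h₁, h₂, C.PsiA_add_fst, C.lce_add]
      have hB : C.lce (C.PsiB (a ⊗ₜ[K] a') r) (t₁ + t₂)
          = C.lce (C.PsiB (a ⊗ₜ[K] a') r) t₁ + C.lce (C.PsiB (a ⊗ₜ[K] a') r) t₂ :=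
        map_add _ t₁ t₂
      rw [hB]
      abel
  | add s₁ s₂ h₁ h₂ =>
    rw [Sh2_add_left, Phi_add_left, h₁, h₂, C.PsiB_add_fst, C.lce_add]
    have hA : C.lce (C.PsiA t r) (s₁ + s₂)
        = C.lce (C.PsiA t r) s₁ + C.lce (C.PsiA t r) s₂ := map_add _ s₁ s₂
    rw [hA]
    abel

theorem phi_split (u v w : T) :
    C.Phi (C.Sh2 (C.Δ u) (C.Δ v)) (C.Δ w)
    = TensorProduct.map C.ϖ (TensorProduct.lift ((C.sh).comp (C.sh u))) (τ (C.Δ v ⊗ₜ[K] C.Δ w))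
      + TensorProduct.map C.ϖ (TensorProduct.lift ((C.sh).comp ((C.sh).flip v))) (τ (C.Δ u ⊗ₜ[K] C.Δ w)) := by
  rw [C.stepA, C.lce_delta, C.lce_delta, C.PsiA_apply, C.PsiB_apply]

theorem phi_split_left (u : T) : ∀ t r : T ⊗[K] T,
    TensorProduct.map C.ϖ (TensorProduct.lift ((C.sh).comp (C.sh u))) (τ (t ⊗ₜ[K] r))
    = TensorProduct.map LinearMap.id (C.sh u) (C.Phi t r) := by
  intro t r
  induction t with
  | zero => simp
  | tmul b b' =>
    induction r with
    | zero => simp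
    | tmul c c' => simp [C.sh_assoc]
    | add r₁ r₂ h₁ h₂ => simp only [tmul_add, map_add, Phi_add_right, h₁, h₂]
  | add t₁ t₂ h₁ h₂ => simp only [add_tmul, map_add, Phi_add_left, h₁, h₂]

theorem phi_split_right (v : T) : ∀ s r : T ⊗[K] T,
    TensorProduct.map C.ϖ (TensorProduct.lift ((C.sh).comp ((C.sh).flip v))) (τ (s ⊗ₜ[K] r))
    = TensorProduct.map LinearMap.id ((C.sh).flip v) (C.Phi s r) := by
  intro s r
  induction s with
  | zero => simp
  | tmul a a' =>
    induction r with
    | zero => simp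
    | tmul c c' =>
      simp only [TensorProduct.tensorTensorTensorComm_tmul, TensorProduct.map_tmul,
        TensorProduct.lift.tmul, LinearMap.comp_apply, LinearMap.flip_apply, Phi_tmul,
        LinearMap.id_coe, id_eq]
      rw [C.sh_assoc, C.sh_comm v c', ← C.sh_assoc]
    | add r₁ r₂ h₁ h₂ => simp only [tmul_add, map_add, Phi_add_right, h₁, h₂]
  | add s₁ s₂ h₁ h₂ => simp only [add_tmul, map_add, Phi_add_left, h₁, h₂]

/-! ### the Leibniz identity -/

theorem leibniz : ∀ u v w : T, C.B (C.sh u v) w = C.sh (C.B u w) v + C.sh u (C.B v w) := by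
  apply cons_ind (p := fun u => ∀ v w : T,
    C.B (C.sh u v) w = C.sh (C.B u w) v + C.sh u (C.B v w))
  · intro v w
    rw [C.hshone, C.B_one, map_zero, LinearMap.zero_apply, zero_add, C.hshone]
  · intro x a iha
    apply cons_ind (p := fun v => ∀ w : T,
      C.B (C.sh (ν x * a) v) w = C.sh (C.B (ν x * a) w) v + C.sh (ν x * a) (C.B v w))
    · intro w
      rw [C.hshone', C.B_one, map_zero, C.hshone', add_zero]
    · intro y b ihb w
      apply C.eq_of
      · simp only [map_add, C.eps_B, C.eps_sh, zero_mul, mul_zero, add_zero, zero_add]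
      · -- L of both sides
        have hLsh : C.Lm (C.sh (ν x * a) (ν y * b))
            = x ⊗ₜ[K] C.sh a (ν y * b) + y ⊗ₜ[K] C.sh (ν x * a) b := by
          rw [C.hshcons, map_add, C.Lm_cons, C.Lm_cons]
        have hL1 : C.Lm (C.B (C.sh (ν x * a) (ν y * b)) w)
            = x ⊗ₜ[K] C.B (C.sh a (ν y * b)) w + y ⊗ₜ[K] C.B (C.sh (ν x * a) b) w
              + TensorProduct.map LinearMap.id (C.sh (ν x * a)) (C.Phi (C.Δ (ν y * b)) (C.Δ w))
              + TensorProduct.map LinearMap.id ((C.sh).flip (ν y * b)) (C.Phi (C.Δ (ν x * a)) (C.Δ w)) := by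
          rw [C.Lm_B, hLsh, C.Delta_sh, C.phi_split, C.phi_split_left, C.phi_split_right]
          simp only [map_add, TensorProduct.map_tmul, LinearMap.id_coe, id_eq,
            LinearMap.flip_apply]
          abel
        have hLBuw : C.Lm (C.B (ν x * a) w)
            = x ⊗ₜ[K] C.B a w + C.Phi (C.Δ (ν x * a)) (C.Δ w) := by
          rw [C.Lm_B, C.Lm_cons]
          simp
        have hLBvw : C.Lm (C.B (ν y * b) w)
            = y ⊗ₜ[K] C.B b w + C.Phi (C.Δ (ν y * b)) (C.Δ w) := by
          rw [C.Lm_B, C.Lm_cons]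
          simp
        have hL2 : C.Lm (C.sh (C.B (ν x * a) w) (ν y * b) + C.sh (ν x * a) (C.B (ν y * b) w))
            = x ⊗ₜ[K] C.sh (C.B a w) (ν y * b)
              + TensorProduct.map LinearMap.id ((C.sh).flip (ν y * b)) (C.Phi (C.Δ (ν x * a)) (C.Δ w))
              + y ⊗ₜ[K] C.sh (C.B (ν x * a) w) b
              + x ⊗ₜ[K] C.sh a (C.B (ν y * b) w)
              + y ⊗ₜ[K] C.sh (ν x * a) (C.B b w)
              + TensorProduct.map LinearMap.id (C.sh (ν x * a)) (C.Phi (C.Δ (ν y * b)) (C.Δ w)) := by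
          rw [map_add, C.Lm_sh, C.Lm_sh, hLBuw, hLBvw, C.Lm_cons, C.Lm_cons]
          simp only [map_add, TensorProduct.map_tmul, LinearMap.id_coe, id_eq,
            LinearMap.flip_apply]
          abel
        rw [hL1, hL2, iha (ν y * b) w, ihb w]
        simp only [tmul_add]
        abel
    · intro w; simp
    · intro v v' hv hv' w
      simp only [map_add, LinearMap.add_apply, hv, hv']
      abel
    · intro c v hv w
      simp only [map_smul, LinearMap.smul_apply, hv, smul_add]
  · intro v w; simp
  · intro a b ha hb v w
    simp only [map_add, LinearMap.add_apply, ha, hb]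
    abel
  · intro c a ha v w
    simp only [map_smul, LinearMap.smul_apply, ha, smul_add]

/-! ### preLie ingredients -/

theorem phi_B_comm (w : T) : ∀ s t : T ⊗[K] T,
    TensorProduct.map LinearMap.id ((C.B).flip w) (C.Phi s t)
    = C.Phi s (TensorProduct.map LinearMap.id ((C.B).flip w) t)
      + TensorProduct.map C.ϖ (TensorProduct.lift ((C.sh).comp ((C.B).flip w))) (τ (s ⊗ₜ[K] t)) := by
  intro s t
  induction s with
  | zero => simp
  | tmul a a' =>
    induction t with
    | zero => simp
    | tmul c c' =>
      simp only [Phi_tmul, TensorProduct.map_tmul, LinearMap.id_coe, id_eq,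
        LinearMap.flip_apply, TensorProduct.tensorTensorTensorComm_tmul,
        TensorProduct.lift.tmul, LinearMap.comp_apply]
      rw [C.leibniz a' c' w, tmul_add]
      abel
    | add t₁ t₂ h₁ h₂ =>
      simp only [tmul_add, map_add, Phi_add_right, h₁, h₂]
      abel
  | add s₁ s₂ h₁ h₂ =>
    simp only [add_tmul, map_add, Phi_add_left, h₁, h₂]
    abel

theorem phi_mapB (v : T) : ∀ s r : T ⊗[K] T,
    C.Phi (TensorProduct.map LinearMap.id ((C.B).flip v) s) r
    = TensorProduct.map C.ϖ (TensorProduct.lift ((C.sh).comp ((C.B).flip v))) (τ (s ⊗ₜ[K] r)) := by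
  intro s r
  induction s with
  | zero => simp
  | tmul a a' =>
    induction r with
    | zero => simp
    | tmul c c' => simp
    | add r₁ r₂ h₁ h₂ => simp only [tmul_add, map_add, Phi_add_right, h₁, h₂]
  | add s₁ s₂ h₁ h₂ => simp only [add_tmul, map_add, Phi_add_left, h₁, h₂]

theorem phi_R
    (hR : ∀ u v w : T, C.ϖ (C.B u v ⊗ₜ[K] w) - C.ϖ (u ⊗ₜ[K] C.B v w)
        = C.ϖ (C.B u w ⊗ₜ[K] v) - C.ϖ (u ⊗ₜ[K] C.B w v)) :
    ∀ s t r : T ⊗[K] T,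
    C.Phi (C.Sw2 s t) r + C.Phi s (C.Sw2 r t)
      = C.Phi s (C.Sw2 t r) + C.Phi (C.Sw2 s r) t := by
  intro s t r
  induction s with
  | zero => simp
  | tmul u₁ u₂ =>
    induction t with
    | zero => simp
    | tmul v₁ v₂ =>
      induction r with
      | zero => simp
      | tmul w₁ w₂ =>
        simp only [Sw2_tmul, Phi_tmul]
        have e1 : C.sh (C.sh u₂ v₂) w₂ = C.sh u₂ (C.sh v₂ w₂) := C.sh_assoc u₂ v₂ w₂
        have e2 : C.sh u₂ (C.sh w₂ v₂) = C.sh u₂ (C.sh v₂ w₂) := by rw [C.sh_comm w₂ v₂]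
        have e3 : C.sh (C.sh u₂ w₂) v₂ = C.sh u₂ (C.sh v₂ w₂) := by
          rw [C.sh_assoc, C.sh_comm w₂ v₂]
        rw [e1, e2, e3, ← add_tmul, ← add_tmul]
        have h := hR u₁ v₁ w₁
        have hsum : C.ϖ (C.B u₁ v₁ ⊗ₜ[K] w₁) + C.ϖ (u₁ ⊗ₜ[K] C.B w₁ v₁)
            = C.ϖ (u₁ ⊗ₜ[K] C.B v₁ w₁) + C.ϖ (C.B u₁ w₁ ⊗ₜ[K] v₁) := by
          have h2 := sub_eq_sub_iff_add_eq_add.mp h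
          -- h2 : ϖ(Buv⊗w) + ϖ(u⊗Bwv) = ϖ(Buw⊗v) + ϖ(u⊗Bvw)
          rw [h2]; abel
        rw [hsum]
      | add r₁ r₂ h₁ h₂ =>
        simp only [Sw2_add_left, Sw2_add_right, Phi_add_left, Phi_add_right]
        have h := congrArg₂ (· + ·) h₁ h₂
        abel_nf at h ⊢
        exact h
    | add t₁ t₂ h₁ h₂ =>
      simp only [Sw2_add_left, Sw2_add_right, Phi_add_left, Phi_add_right]
      have h := congrArg₂ (· + ·) h₁ h₂
      abel_nf at h ⊢
      exact h
  | add s₁ s₂ h₁ h₂ =>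
    simp only [Sw2_add_left, Sw2_add_right, Phi_add_left, Phi_add_right]
    have h := congrArg₂ (· + ·) h₁ h₂
    abel_nf at h ⊢
    exact h

/-! ### the preLie identity -/

theorem prelie
    (hR : ∀ u v w : T, C.ϖ (C.B u v ⊗ₜ[K] w) - C.ϖ (u ⊗ₜ[K] C.B v w)
        = C.ϖ (C.B u w ⊗ₜ[K] v) - C.ϖ (u ⊗ₜ[K] C.B w v)) :
    ∀ u v w : T, C.B (C.B u v) w - C.B u (C.B v w) = C.B (C.B u w) v - C.B u (C.B w v) := by
  apply cons_ind (p := fun u => ∀ v w : T,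
    C.B (C.B u v) w - C.B u (C.B v w) = C.B (C.B u w) v - C.B u (C.B w v))
  · intro v w
    simp [C.B_one]
  · intro x a iha
    intro v w
    apply C.eq_of
    · simp only [map_sub, C.eps_B, sub_self]
    · -- L parts
      have hBx : ∀ p : T, C.Lm (C.B (ν x * a) p)
          = x ⊗ₜ[K] C.B a p + C.Phi (C.Δ (ν x * a)) (C.Δ p) := by
        intro p
        rw [C.Lm_B, C.Lm_cons]
        simp
      have h1 : C.Lm (C.B (C.B (ν x * a) v) w)
          = x ⊗ₜ[K] C.B (C.B a v) w
            + TensorProduct.map LinearMap.id ((C.B).flip w) (C.Phi (C.Δ (ν x * a)) (C.Δ v))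
            + C.Phi (TensorProduct.map LinearMap.id ((C.B).flip v) (C.Δ (ν x * a))) (C.Δ w)
            + C.Phi (C.Sw2 (C.Δ (ν x * a)) (C.Δ v)) (C.Δ w) := by
        rw [C.Lm_B, hBx v, C.Delta_B]
        simp only [map_add, Phi_add_left, TensorProduct.map_tmul, LinearMap.id_coe, id_eq,
          LinearMap.flip_apply]
        abel
      have h2 : C.Lm (C.B (ν x * a) (C.B v w))
          = x ⊗ₜ[K] C.B a (C.B v w)
            + C.Phi (C.Δ (ν x * a)) (TensorProduct.map LinearMap.id ((C.B).flip w) (C.Δ v))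
            + C.Phi (C.Δ (ν x * a)) (C.Sw2 (C.Δ v) (C.Δ w)) := by
        rw [hBx (C.B v w), C.Delta_B]
        simp only [Phi_add_right]
        abel
      have h1' : C.Lm (C.B (C.B (ν x * a) w) v)
          = x ⊗ₜ[K] C.B (C.B a w) v
            + TensorProduct.map LinearMap.id ((C.B).flip v) (C.Phi (C.Δ (ν x * a)) (C.Δ w))
            + C.Phi (TensorProduct.map LinearMap.id ((C.B).flip w) (C.Δ (ν x * a))) (C.Δ v)
            + C.Phi (C.Sw2 (C.Δ (ν x * a)) (C.Δ w)) (C.Δ v) := by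
        rw [C.Lm_B, hBx w, C.Delta_B]
        simp only [map_add, Phi_add_left, TensorProduct.map_tmul, LinearMap.id_coe, id_eq,
          LinearMap.flip_apply]
        abel
      have h2' : C.Lm (C.B (ν x * a) (C.B w v))
          = x ⊗ₜ[K] C.B a (C.B w v)
            + C.Phi (C.Δ (ν x * a)) (TensorProduct.map LinearMap.id ((C.B).flip v) (C.Δ w))
            + C.Phi (C.Δ (ν x * a)) (C.Sw2 (C.Δ w) (C.Δ v)) := by
        rw [hBx (C.B w v), C.Delta_B]
        simp only [Phi_add_right]
        abel
      have hIH : x ⊗ₜ[K] C.B (C.B a v) w - x ⊗ₜ[K] C.B a (C.B v w)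
          = x ⊗ₜ[K] C.B (C.B a w) v - x ⊗ₜ[K] C.B a (C.B w v) := by
        rw [← tmul_sub, ← tmul_sub, iha v w]
      have hz : C.Phi (C.Sw2 (C.Δ (ν x * a)) (C.Δ v)) (C.Δ w)
            - C.Phi (C.Δ (ν x * a)) (C.Sw2 (C.Δ v) (C.Δ w))
          = C.Phi (C.Sw2 (C.Δ (ν x * a)) (C.Δ w)) (C.Δ v)
            - C.Phi (C.Δ (ν x * a)) (C.Sw2 (C.Δ w) (C.Δ v)) := by
        rw [sub_eq_sub_iff_add_eq_add]
        have := C.phi_R hR (C.Δ (ν x * a)) (C.Δ v) (C.Δ w)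
        rw [this]; abel
      rw [map_sub, map_sub, h1, h2, h1', h2',
        C.phi_B_comm w (C.Δ (ν x * a)) (C.Δ v), C.phi_B_comm v (C.Δ (ν x * a)) (C.Δ w),
        C.phi_mapB v (C.Δ (ν x * a)) (C.Δ w), C.phi_mapB w (C.Δ (ν x * a)) (C.Δ v)]
      -- now pure additive identity modulo hIH, hz
      have goal_eq : ∀ A A' Pw Pv Xw Xv Z Z2 Z' Z2' : V ⊗[K] T,
          A - A' = 0 → Z - Z2 = 0 →
          (A + (Pw + Xw) + Xv + Z) - (A' + Pw + Z2) = (Xw + Xv + Z) - Z2 + (A - A') := by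
        intros; abel
      -- do it directly with abel-style manipulation
      have lhs_eq : (x ⊗ₜ[K] C.B (C.B a v) w
            + (C.Phi (C.Δ (ν x * a)) (TensorProduct.map LinearMap.id ((C.B).flip w) (C.Δ v))
              + TensorProduct.map C.ϖ (TensorProduct.lift ((C.sh).comp ((C.B).flip w)))
                  (τ (C.Δ (ν x * a) ⊗ₜ[K] C.Δ v)))
            + TensorProduct.map C.ϖ (TensorProduct.lift ((C.sh).comp ((C.B).flip v)))
                  (τ (C.Δ (ν x * a) ⊗ₜ[K] C.Δ w))
            + C.Phi (C.Sw2 (C.Δ (ν x * a)) (C.Δ v)) (C.Δ w))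
          - (x ⊗ₜ[K] C.B a (C.B v w)
            + C.Phi (C.Δ (ν x * a)) (TensorProduct.map LinearMap.id ((C.B).flip w) (C.Δ v))
            + C.Phi (C.Δ (ν x * a)) (C.Sw2 (C.Δ v) (C.Δ w)))
          = (x ⊗ₜ[K] C.B (C.B a v) w - x ⊗ₜ[K] C.B a (C.B v w))
            + (TensorProduct.map C.ϖ (TensorProduct.lift ((C.sh).comp ((C.B).flip w)))
                  (τ (C.Δ (ν x * a) ⊗ₜ[K] C.Δ v))
              + TensorProduct.map C.ϖ (TensorProduct.lift ((C.sh).comp ((C.B).flip v)))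
                  (τ (C.Δ (ν x * a) ⊗ₜ[K] C.Δ w)))
            + (C.Phi (C.Sw2 (C.Δ (ν x * a)) (C.Δ v)) (C.Δ w)
              - C.Phi (C.Δ (ν x * a)) (C.Sw2 (C.Δ v) (C.Δ w))) := by abel
      have rhs_eq : (x ⊗ₜ[K] C.B (C.B a w) v
            + (C.Phi (C.Δ (ν x * a)) (TensorProduct.map LinearMap.id ((C.B).flip v) (C.Δ w))
              + TensorProduct.map C.ϖ (TensorProduct.lift ((C.sh).comp ((C.B).flip v)))
                  (τ (C.Δ (ν x * a) ⊗ₜ[K] C.Δ w)))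
            + TensorProduct.map C.ϖ (TensorProduct.lift ((C.sh).comp ((C.B).flip w)))
                  (τ (C.Δ (ν x * a) ⊗ₜ[K] C.Δ v))
            + C.Phi (C.Sw2 (C.Δ (ν x * a)) (C.Δ w)) (C.Δ v))
          - (x ⊗ₜ[K] C.B a (C.B w v)
            + C.Phi (C.Δ (ν x * a)) (TensorProduct.map LinearMap.id ((C.B).flip v) (C.Δ w))
            + C.Phi (C.Δ (ν x * a)) (C.Sw2 (C.Δ w) (C.Δ v)))
          = (x ⊗ₜ[K] C.B (C.B a w) v - x ⊗ₜ[K] C.B a (C.B w v))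
            + (TensorProduct.map C.ϖ (TensorProduct.lift ((C.sh).comp ((C.B).flip w)))
                  (τ (C.Δ (ν x * a) ⊗ₜ[K] C.Δ v))
              + TensorProduct.map C.ϖ (TensorProduct.lift ((C.sh).comp ((C.B).flip v)))
                  (τ (C.Δ (ν x * a) ⊗ₜ[K] C.Δ w)))
            + (C.Phi (C.Sw2 (C.Δ (ν x * a)) (C.Δ w)) (C.Δ v)
              - C.Phi (C.Δ (ν x * a)) (C.Sw2 (C.Δ w) (C.Δ v))) := by abel
      rw [lhs_eq, rhs_eq, hIH, hz]
  · intro v w; simp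
  · intro a b ha hb v w
    have e := congrArg₂ (· + ·) (ha v w) (hb v w)
    simp only [map_add, LinearMap.add_apply] at e ⊢
    calc _ = (C.B (C.B a v) w - C.B a (C.B v w)) + (C.B (C.B b v) w - C.B b (C.B v w)) := by abel
    _ = (C.B (C.B a w) v - C.B a (C.B w v)) + (C.B (C.B b w) v - C.B b (C.B w v)) := by
        rw [ha v w, hb v w]
    _ = _ := by abel
  · intro c a ha v w
    simp only [map_smul, LinearMap.smul_apply]
    rw [← smul_sub, ← smul_sub, ha v w]

end Ctx
end CPL

/-- Let `ϖ : T(V)⊗T(V) → V` satisfy `ϖ((u⧢v)⊗w) = ε(u)ϖ(v⊗w) + ε(v)ϖ(u⊗w)` and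
let `•` be the associated product. Then `(T(V),⧢,•,Δ)` is a Com-PreLie
bialgebra iff `ϖ(u•v⊗w) - ϖ(u⊗v•w) = ϖ(u•w⊗v) - ϖ(u⊗w•v)` for all `u,v,w`. -/
theorem comPreLie_iff_varpi_cond {K V : Type*} [Field K] [CharZero K]
    [AddCommGroup V] [Module K V]
    (Δ : TensorAlgebra K V →ₗ[K] TensorAlgebra K V ⊗[K] TensorAlgebra K V)
    (hΔone : Δ 1 = 1 ⊗ₜ[K] 1)
    (hΔcons : ∀ (v : V) (u : TensorAlgebra K V),
      Δ (TensorAlgebra.ι K v * u) =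
        1 ⊗ₜ[K] (TensorAlgebra.ι K v * u)
        + TensorProduct.map (LinearMap.mulLeft K (TensorAlgebra.ι K v))
            LinearMap.id (Δ u))
    (sh : TensorAlgebra K V →ₗ[K] TensorAlgebra K V →ₗ[K] TensorAlgebra K V)
    (hshone : ∀ u, sh 1 u = u) (hshone' : ∀ u, sh u 1 = u)
    (hshcons : ∀ (x y : V) (u w : TensorAlgebra K V),
      sh (TensorAlgebra.ι K x * u) (TensorAlgebra.ι K y * w) =
        TensorAlgebra.ι K x * sh u (TensorAlgebra.ι K y * w)
        + TensorAlgebra.ι K y * sh (TensorAlgebra.ι K x * u) w)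
    (π : TensorAlgebra K V →ₗ[K] V)
    (hπone : π 1 = 0) (hπι : ∀ v : V, π (TensorAlgebra.ι K v) = v)
    (hπtwo : ∀ (v w : V) (u : TensorAlgebra K V),
      π (TensorAlgebra.ι K v * (TensorAlgebra.ι K w * u)) = 0)
    (ε : TensorAlgebra K V →ₗ[K] K)
    (hεone : ε 1 = 1)
    (hεcons : ∀ (v : V) (u : TensorAlgebra K V), ε (TensorAlgebra.ι K v * u) = 0)
    (ϖ : TensorAlgebra K V ⊗[K] TensorAlgebra K V →ₗ[K] V)
    (hEQ2 : ∀ u v w : TensorAlgebra K V,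
      ϖ (sh u v ⊗ₜ[K] w) = ε u • ϖ (v ⊗ₜ[K] w) + ε v • ϖ (u ⊗ₜ[K] w))
    (B : TensorAlgebra K V →ₗ[K] TensorAlgebra K V →ₗ[K] TensorAlgebra K V)
    (hBπ : ∀ u v : TensorAlgebra K V, π (B u v) = ϖ (u ⊗ₜ[K] v))
    (hBΔ : ∀ u v : TensorAlgebra K V, Δ (B u v) =
      TensorProduct.map LinearMap.id (B.flip v) (Δ u)
      + TensorProduct.map (TensorProduct.lift B) (TensorProduct.lift sh)
          (TensorProduct.tensorTensorTensorComm K (TensorAlgebra K V)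
            (TensorAlgebra K V) (TensorAlgebra K V) (TensorAlgebra K V)
            (Δ u ⊗ₜ[K] Δ v))) :
    ((∀ u v : TensorAlgebra K V, sh u v = sh v u) ∧
     (∀ u v w : TensorAlgebra K V, sh (sh u v) w = sh u (sh v w)) ∧
     (∀ u v w : TensorAlgebra K V,
       B (B u v) w - B u (B v w) = B (B u w) v - B u (B w v)) ∧
     (∀ u v w : TensorAlgebra K V,
       B (sh u v) w = sh (B u w) v + sh u (B v w))) ↔
      (∀ u v w : TensorAlgebra K V,
        ϖ (B u v ⊗ₜ[K] w) - ϖ (u ⊗ₜ[K] B v w) =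
          ϖ (B u w ⊗ₜ[K] v) - ϖ (u ⊗ₜ[K] B w v)) := by
  let C : CPL.Ctx K V :=
    ⟨Δ, hΔone, hΔcons, sh, hshone, hshone', hshcons, π, hπone, hπι, hπtwo,
      ε, hεone, hεcons, ϖ, hEQ2, B, hBπ, hBΔ⟩
  constructor
  · rintro ⟨-, -, hpre, -⟩
    intro u v w
    have h := congrArg π (hpre u v w)
    simpa only [map_sub, hBπ] using h
  · intro hR
    exact ⟨C.sh_comm, C.sh_assoc, C.prelie hR, C.leibniz⟩
end

section
/- Let V be the 3-dimensional space with basis (x,y,z), and scalars a,b,c. Define • by x•x=x, x•y=y, x•z=z, all other products of basis elements zero; define the antisymmetric bracket by {x,y} = ay+bz, {x,z} = cy+(1-a)z, {y,z} = 0. Then (V,•,{-,-}) satisfies the four conditions (• preLie, {-,-} antisymmetric, u•{v,w} = {u•v,w}, {u,v}•w = {u•w,v}+{u,v•w}+{{u,v},w}) if and only if a² - a + bc = 0. -/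
/-- On the 3-dimensional space with basis `(x,y,z) = (e 0, e 1, e 2)`, with
`x•x=x, x•y=y, x•z=z` (other products zero) and antisymmetric bracket
`{x,y} = ay+bz`, `{x,z} = cy+(1-a)z`, `{y,z} = 0`, the four Com-PreLie
compatibility conditions hold iff `a² - a + bc = 0`. -/
theorem dim3_example_iff {K : Type*} [Field K] [CharZero K] (a b c : K)
    (B Br : (Fin 3 → K) →ₗ[K] (Fin 3 → K) →ₗ[K] (Fin 3 → K))
    (e : Fin 3 → (Fin 3 → K)) (he : ∀ i, e i = Pi.single i 1)
    (hB00 : B (e 0) (e 0) = e 0)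
    (hB01 : B (e 0) (e 1) = e 1)
    (hB02 : B (e 0) (e 2) = e 2)
    (hB10 : B (e 1) (e 0) = 0)
    (hB11 : B (e 1) (e 1) = 0)
    (hB12 : B (e 1) (e 2) = 0)
    (hB20 : B (e 2) (e 0) = 0)
    (hB21 : B (e 2) (e 1) = 0)
    (hB22 : B (e 2) (e 2) = 0)
    (hBr00 : Br (e 0) (e 0) = 0)
    (hBr11 : Br (e 1) (e 1) = 0)
    (hBr22 : Br (e 2) (e 2) = 0)
    (hBr01 : Br (e 0) (e 1) = a • e 1 + b • e 2)
    (hBr10 : Br (e 1) (e 0) = -(a • e 1 + b • e 2))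
    (hBr02 : Br (e 0) (e 2) = c • e 1 + (1 - a) • e 2)
    (hBr20 : Br (e 2) (e 0) = -(c • e 1 + (1 - a) • e 2))
    (hBr12 : Br (e 1) (e 2) = 0)
    (hBr21 : Br (e 2) (e 1) = 0) :
    ((∀ u v w : Fin 3 → K,
        B (B u v) w - B u (B v w) = B (B u w) v - B u (B w v)) ∧
     (∀ u v : Fin 3 → K, Br u v = - Br v u) ∧
     (∀ u v w : Fin 3 → K, B u (Br v w) = Br (B u v) w) ∧
     (∀ u v w : Fin 3 → K,
        B (Br u v) w = Br (B u w) v + Br u (B v w) + Br (Br u v) w)) ↔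
      a ^ 2 - a + b * c = 0 := by

  have hrep : ∀ u : Fin 3 → K, u = u 0 • e 0 + u 1 • e 1 + u 2 • e 2 := by
    intro u
    funext i
    fin_cases i <;> simp [he]
  constructor
  · rintro ⟨h1, h2, h3, h4⟩
    have h := h4 (e 0) (e 1) (e 0)
    rw [hBr01, hB00, hB10] at h
    simp only [map_add, map_smul, LinearMap.add_apply, LinearMap.smul_apply,
      hB10, hB20, hBr01, hBr10, hBr20, map_zero, smul_zero, add_zero, zero_add,
      smul_neg, smul_add, smul_smul] at h
    have e11 : e 1 1 = 1 := by rw [he]; simp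
    have e21 : e 2 1 = (0 : K) := by
      rw [he]; exact Pi.single_eq_of_ne (by decide) 1
    have h1' := congrFun h 1
    simp only [Pi.add_apply, Pi.neg_apply, Pi.smul_apply, Pi.zero_apply,
      smul_eq_mul, e11, e21, mul_one, mul_zero, add_zero, neg_zero,
      neg_add_rev] at h1'
    linear_combination h1'
  · intro hc
    refine ⟨?_, ?_, ?_, ?_⟩
    · intro u v w
      rw [hrep u, hrep v, hrep w]
      simp only [map_add, map_smul, LinearMap.add_apply, LinearMap.smul_apply,
        hB00, hB01, hB02, hB10, hB11, hB12, hB20, hB21, hB22,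
        map_zero, smul_zero, add_zero, zero_add, LinearMap.zero_apply,
        smul_add, smul_smul]
      module
    · intro u v
      rw [hrep u, hrep v]
      simp only [map_add, map_smul, LinearMap.add_apply, LinearMap.smul_apply,
        hBr00, hBr01, hBr02, hBr10, hBr11, hBr12, hBr20, hBr21, hBr22,
        map_zero, smul_zero, add_zero, zero_add, LinearMap.zero_apply,
        smul_add, smul_neg, smul_smul]
      module
    · intro u v w
      rw [hrep u, hrep v, hrep w]
      simp only [map_add, map_smul, LinearMap.add_apply, LinearMap.smul_apply,
        hB00, hB01, hB02, hB10, hB11, hB12, hB20, hB21, hB22,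
        hBr00, hBr01, hBr02, hBr10, hBr11, hBr12, hBr20, hBr21, hBr22,
        map_zero, smul_zero, add_zero, zero_add, LinearMap.zero_apply,
        map_neg, smul_add, smul_neg, smul_smul, neg_zero]
      module
    · intro u v w
      rw [hrep u, hrep v, hrep w]
      simp only [map_add, map_smul, LinearMap.add_apply, LinearMap.smul_apply,
        hB00, hB01, hB02, hB10, hB11, hB12, hB20, hB21, hB22,
        hBr00, hBr01, hBr02, hBr10, hBr11, hBr12, hBr20, hBr21, hBr22,
        map_zero, smul_zero, add_zero, zero_add, LinearMap.zero_apply,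
        map_neg, smul_add, smul_neg, smul_smul, neg_zero, neg_neg,
        LinearMap.neg_apply]
      match_scalars
      · linear_combination (u 0 * v 1 * w 0 - u 1 * v 0 * w 0) * hc
      · linear_combination (u 0 * v 2 * w 0 - u 2 * v 0 * w 0) * hc
end

section
/- Let A₊ be a Com-PreLie algebra (not necessarily unitary) and f : A₊ → A₊ a linear map that is a derivation for both products: f(x·y) = f(x)·y + x·f(y) and f(x•y) = f(x)•y + x•f(y). Set A = A₊ ⊕ K·1 and extend the products by 1·1 = 1, x·1 = 1·x = x, 1•a = 0 for all a ∈ A, x•1 = f(x) for x ∈ A₊. Then A is a unitary Com-PreLie algebra. -/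
/-! Every identity is checked coordinatewise on `A₊ × K`: the axioms of `A₊` handle the
`A₊`-parts, and `f` being a derivation handles the terms created by the unit. For
`p = (x, s)`, `q = (y, t)`, `r = (z, u)`, the associator `(p • q) • r - p • (q • r)` is that of
`x, y, z` plus `t f(x) • z + u f(x) • y + t u f(f(x))`, which is symmetric in `q, r` once
`f(x • y)` is expanded; and the Leibniz rule with `r = 1` is `f(x · y) = f(x) · y + x · f(y)`. -/

section Unitization

variable {K A : Type*} [CommRing K] [AddCommGroup A] [Module K A]

theorem unitization_mul_comm (mul : A →ₗ[K] A →ₗ[K] A) (hcomm : ∀ x y : A, mul x y = mul y x)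
    (M : A × K → A × K → A × K)
    (hM : ∀ (x y : A) (s t : K), M (x, s) (y, t) = (mul x y + t • x + s • y, s * t))
    (p q : A × K) : M p q = M q p := by
  obtain ⟨x, s⟩ := p
  obtain ⟨y, t⟩ := q
  rw [hM, hM, hcomm, mul_comm s t, add_right_comm]

theorem unitization_mul_assoc (mul : A →ₗ[K] A →ₗ[K] A)
    (hassoc : ∀ x y z : A, mul (mul x y) z = mul x (mul y z))
    (M : A × K → A × K → A × K)
    (hM : ∀ (x y : A) (s t : K), M (x, s) (y, t) = (mul x y + t • x + s • y, s * t))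
    (p q r : A × K) : M (M p q) r = M p (M q r) := by
  obtain ⟨x, s⟩ := p
  obtain ⟨y, t⟩ := q
  obtain ⟨z, u⟩ := r
  simp only [hM, map_add, map_smul, LinearMap.add_apply, LinearMap.smul_apply, hassoc,
    Prod.mk.injEq]
  exact ⟨by module, mul_assoc s t u⟩

theorem unitization_one_mul (mul : A →ₗ[K] A →ₗ[K] A) (M : A × K → A × K → A × K)
    (hM : ∀ (x y : A) (s t : K), M (x, s) (y, t) = (mul x y + t • x + s • y, s * t))
    (p : A × K) : M (0, 1) p = p := by
  obtain ⟨x, s⟩ := p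
  simp [hM]

theorem unitization_rightPreLie (bul : A →ₗ[K] A →ₗ[K] A)
    (hpre : ∀ x y z : A,
      bul (bul x y) z - bul x (bul y z) = bul (bul x z) y - bul x (bul z y))
    (f : A →ₗ[K] A) (hfbul : ∀ x y : A, f (bul x y) = bul (f x) y + bul x (f y))
    (B : A × K → A × K → A × K)
    (hB : ∀ (x y : A) (s t : K), B (x, s) (y, t) = (bul x y + t • f x, 0))
    (p q r : A × K) : B (B p q) r - B p (B q r) = B (B p r) q - B p (B r q) := by
  obtain ⟨x, s⟩ := p
  obtain ⟨y, t⟩ := q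
  obtain ⟨z, u⟩ := r
  simp only [hB, map_add, map_smul, LinearMap.add_apply, LinearMap.smul_apply, hfbul,
    Prod.mk_sub_mk, sub_self, Prod.mk.injEq, and_true]
  linear_combination (norm := module) hpre x y z

theorem unitization_leibniz (mul bul : A →ₗ[K] A →ₗ[K] A)
    (hleib : ∀ x y z : A, bul (mul x y) z = mul (bul x z) y + mul x (bul y z))
    (f : A →ₗ[K] A) (hfmul : ∀ x y : A, f (mul x y) = mul (f x) y + mul x (f y))
    (M B : A × K → A × K → A × K)
    (hM : ∀ (x y : A) (s t : K), M (x, s) (y, t) = (mul x y + t • x + s • y, s * t))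
    (hB : ∀ (x y : A) (s t : K), B (x, s) (y, t) = (bul x y + t • f x, 0))
    (p q r : A × K) : B (M p q) r = M (B p r) q + M p (B q r) := by
  obtain ⟨x, s⟩ := p
  obtain ⟨y, t⟩ := q
  obtain ⟨z, u⟩ := r
  simp only [hM, hB, map_add, map_smul, LinearMap.add_apply, LinearMap.smul_apply, hleib,
    hfmul, Prod.mk_add_mk, mul_zero, zero_mul, add_zero, Prod.mk.injEq, and_true]
  module

end Unitization

theorem unitization_comPreLie_general {K A : Type*} [Field K]
    [AddCommGroup A] [Module K A]
    (mul bul : A →ₗ[K] A →ₗ[K] A)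
    (hcomm : ∀ x y : A, mul x y = mul y x)
    (hassoc : ∀ x y z : A, mul (mul x y) z = mul x (mul y z))
    (hpre : ∀ x y z : A,
      bul (bul x y) z - bul x (bul y z) = bul (bul x z) y - bul x (bul z y))
    (hleib : ∀ x y z : A, bul (mul x y) z = mul (bul x z) y + mul x (bul y z))
    (f : A →ₗ[K] A)
    (hfmul : ∀ x y : A, f (mul x y) = mul (f x) y + mul x (f y))
    (hfbul : ∀ x y : A, f (bul x y) = bul (f x) y + bul x (f y))
    (M B : (A × K) →ₗ[K] (A × K) →ₗ[K] (A × K))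
    (hM : ∀ (x y : A) (s t : K),
      M (x, s) (y, t) = (mul x y + t • x + s • y, s * t))
    (hB : ∀ (x y : A) (s t : K),
      B (x, s) (y, t) = (bul x y + t • f x, 0)) :
    (∀ p q : A × K, M p q = M q p) ∧
    (∀ p q r : A × K, M (M p q) r = M p (M q r)) ∧
    (∀ p : A × K, M ((0, 1) : A × K) p = p) ∧
    (∀ p q r : A × K,
      B (B p q) r - B p (B q r) = B (B p r) q - B p (B r q)) ∧
    (∀ p q r : A × K, B (M p q) r = M (B p r) q + M p (B q r)) :=
  ⟨unitization_mul_comm mul hcomm (M · ·) hM,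
    unitization_mul_assoc mul hassoc (M · ·) hM,
    unitization_one_mul mul (M · ·) hM,
    unitization_rightPreLie bul hpre f hfbul (B · ·) hB,
    unitization_leibniz mul bul hleib f hfmul (M · ·) (B · ·) hM hB⟩

/-- Adjoining a unit to a Com-PreLie algebra `A₊` along a derivation `f` (for
both products), with `x • 1 = f(x)` and `1 • a = 0`, yields a unitary
Com-PreLie algebra on `A = A₊ ⊕ K`. -/
theorem unitization_comPreLie {K A : Type*} [Field K] [CharZero K]
    [AddCommGroup A] [Module K A]
    (mul bul : A →ₗ[K] A →ₗ[K] A)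
    (hcomm : ∀ x y : A, mul x y = mul y x)
    (hassoc : ∀ x y z : A, mul (mul x y) z = mul x (mul y z))
    (hpre : ∀ x y z : A,
      bul (bul x y) z - bul x (bul y z) = bul (bul x z) y - bul x (bul z y))
    (hleib : ∀ x y z : A, bul (mul x y) z = mul (bul x z) y + mul x (bul y z))
    (f : A →ₗ[K] A)
    (hfmul : ∀ x y : A, f (mul x y) = mul (f x) y + mul x (f y))
    (hfbul : ∀ x y : A, f (bul x y) = bul (f x) y + bul x (f y))
    (M B : (A × K) →ₗ[K] (A × K) →ₗ[K] (A × K))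
    (hM : ∀ (x y : A) (s t : K),
      M (x, s) (y, t) = (mul x y + t • x + s • y, s * t))
    (hB : ∀ (x y : A) (s t : K),
      B (x, s) (y, t) = (bul x y + t • f x, 0)) :
    (∀ p q : A × K, M p q = M q p) ∧
    (∀ p q r : A × K, M (M p q) r = M p (M q r)) ∧
    (∀ p : A × K, M ((0, 1) : A × K) p = p) ∧
    (∀ p q r : A × K,
      B (B p q) r - B p (B q r) = B (B p r) q - B p (B r q)) ∧
    (∀ p q r : A × K, B (M p q) r = M (B p r) q + M p (B q r)) :=
  unitization_comPreLie_general mul bul hcomm hassoc hpre hleib f hfmul hfbul M B hM hB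
end

section
/- Let A be a Com-PreLie bialgebra with unit 1 and let f_A(a) = a•1 on primitive elements. For every primitive a ∈ Prim(A), every k ≥ 0, and all b₁,…,b_l ∈ A, with the Oudom–Guin extension of •: a•(1^{×k} × b₁×…×b_l) = f_A^k(a)•(b₁×…×b_l). -/
open TensorProduct

/-- In a Com-PreLie bialgebra, for `a` primitive, with the Oudom–Guin
extension of `•` (written `ext a l` for `a • (l₁×…×lₖ)`):
`a • (1^{×k} × b₁×…×b_l) = f_A^k(a) • (b₁×…×b_l)` where `f_A(x) = x • 1`. -/
theorem bullet_unit_powers {K A : Type*} [Field K] [CharZero K]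
    [CommRing A] [Bialgebra K A]
    (bul : A →ₗ[K] A →ₗ[K] A)
    (hpre : ∀ x y z : A,
      bul (bul x y) z - bul x (bul y z) = bul (bul x z) y - bul x (bul z y))
    (hleib : ∀ x y z : A, bul (x * y) z = bul x z * y + x * bul y z)
    (hcompat : ∀ x y : A, Coalgebra.comul (R := K) (bul x y) =
      TensorProduct.map LinearMap.id (bul.flip y) (Coalgebra.comul (R := K) x)
      + TensorProduct.map (TensorProduct.lift bul) (LinearMap.mul' K A)
          (TensorProduct.tensorTensorTensorComm K A A A A
            (Coalgebra.comul (R := K) x ⊗ₜ[K] Coalgebra.comul (R := K) y)))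
    (ext : A → List A → A)
    (hext_nil : ∀ a : A, ext a [] = a)
    (hext_snoc : ∀ (a : A) (l : List A) (c : A),
      ext a (l ++ [c]) =
        bul (ext a l) c - ∑ i : Fin l.length, ext a (l.set i (bul (l.get i) c))) :
    ∀ a : A, Coalgebra.comul (R := K) a = a ⊗ₜ[K] 1 + 1 ⊗ₜ[K] a →
      ∀ (k : ℕ) (l : List A),
        ext a (List.replicate k (1 : A) ++ l) =
          ext ((fun x : A => bul x 1)^[k] a) l := by
  -- `bul 1 z = 0`
  have h1 : ∀ z : A, bul 1 z = 0 := by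
    intro z
    have h := hleib 1 1 z
    rw [mul_one, mul_one, one_mul] at h
    linear_combination -h
  -- if a list has a zero entry, `ext` of it vanishes
  have hZ : ∀ (n : ℕ) (a : A) (l : List A), l.length = n →
      (∃ j : Fin l.length, l.get j = 0) → ext a l = 0 := by
    intro n
    induction n with
    | zero =>
      intro a l hlen hj
      obtain ⟨j, -⟩ := hj
      have := j.isLt
      omega
    | succ n ih =>
      intro a l hlen hj
      rcases List.eq_nil_or_concat l with rfl | ⟨L, c, hl⟩
      · simp at hlen
      · rw [List.concat_eq_append] at hl
        subst hl
        obtain ⟨j, hj⟩ := hj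
        have hlenL : L.length = n := by simpa using hlen
        rw [hext_snoc]
        rcases lt_or_ge (j : ℕ) L.length with hjL | hjL
        · -- the zero entry lies in `L`
          have hL0 : L[(j : ℕ)]'hjL = 0 := by
            have h := hj
            rw [List.get_eq_getElem, List.getElem_append_left hjL] at h
            exact h
          have h2 : ext a L = 0 := ih a L hlenL ⟨⟨j, hjL⟩, by simpa using hL0⟩
          rw [h2, map_zero, LinearMap.zero_apply, zero_sub, neg_eq_zero]
          apply Finset.sum_eq_zero
          intro i _
          apply ih a _ (by simp [hlenL])
          refine ⟨⟨j, by simpa using hjL⟩, ?_⟩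
          rw [List.get_eq_getElem]
          by_cases hij : (i : ℕ) = (j : ℕ)
          · rw [List.getElem_set, if_pos hij, List.get_eq_getElem]
            have : L[(i : ℕ)]'(i.isLt) = 0 := by
              subst hlenL
              simp only [hij]
              exact hL0
            rw [this, map_zero, LinearMap.zero_apply]
          · rw [List.getElem_set, if_neg hij]
            exact hL0
        · -- the zero entry is `c`
          have hc : c = 0 := by
            have hjl : (j : ℕ) = L.length := by
              have := j.isLt
              simp only [List.length_append, List.length_singleton] at this
              omega
            have h := hj
            rw [List.get_eq_getElem, List.getElem_append_right hjL] at h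
            simpa [hjl] using h
          subst hc
          rw [map_zero, zero_sub, neg_eq_zero]
          apply Finset.sum_eq_zero
          intro i _
          apply ih a _ (by simp [hlenL])
          refine ⟨⟨i, by simpa using i.isLt⟩, ?_⟩
          rw [List.get_eq_getElem]
          simp [List.getElem_set]
  -- base case: `ext a (1^{×k}) = f^[k] a`
  have hbase : ∀ (a : A) (k : ℕ),
      ext a (List.replicate k (1 : A)) = (fun x : A => bul x 1)^[k] a := by
    intro a k
    induction k with
    | zero => simp [hext_nil]
    | succ k ih =>
      have hrep : List.replicate (k + 1) (1 : A) = List.replicate k (1 : A) ++ [1] := by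
        rw [List.replicate_succ']
      rw [hrep, hext_snoc, ih]
      have hsum : ∑ i : Fin (List.replicate k (1 : A)).length,
          ext a ((List.replicate k (1 : A)).set i
            (bul ((List.replicate k (1 : A)).get i) 1)) = 0 := by
        apply Finset.sum_eq_zero
        intro i _
        have hget : (List.replicate k (1 : A)).get i = 1 := by
          simp [List.get_eq_getElem]
        rw [hget, h1]
        apply hZ k a _ (by simp)
        have hik : (i : ℕ) < k := by simpa using i.isLt
        exact ⟨⟨i, by simpa using hik⟩, by simp [List.get_eq_getElem, List.getElem_set]⟩
      rw [hsum, sub_zero, Function.iterate_succ_apply']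
  intro a _ k
  -- main induction on the length of `l`
  have main : ∀ (n : ℕ) (l : List A), l.length = n →
      ext a (List.replicate k (1 : A) ++ l) =
        ext ((fun x : A => bul x 1)^[k] a) l := by
    intro n
    induction n with
    | zero =>
      intro l hlen
      rw [List.length_eq_zero_iff] at hlen
      subst hlen
      simp [hext_nil, hbase]
    | succ n ih =>
      intro l hlen
      rcases List.eq_nil_or_concat l with rfl | ⟨L, c, hl⟩
      · simp at hlen
      · rw [List.concat_eq_append] at hl
        subst hl
        have hlenL : L.length = n := by simpa using hlen
        rw [← List.append_assoc, hext_snoc, hext_snoc, ih L hlenL]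
        congr 1
        set M : List A := List.replicate k (1 : A) ++ L with hMdef
        have hM : M.length = k + L.length := by simp [hMdef]
        have hcast := Fin.sum_congr'
          (fun i : Fin M.length => ext a (M.set i (bul (M.get i) c))) hM.symm
        rw [← hcast, Fin.sum_univ_add]
        have hfst : ∑ i : Fin k,
            (fun i : Fin M.length => ext a (M.set i (bul (M.get i) c)))
              (Fin.cast hM.symm (Fin.castAdd L.length i)) = 0 := by
          apply Finset.sum_eq_zero
          intro i _
          simp only [Fin.cast, Fin.castAdd, Fin.castLE]
          have hik : (i : ℕ) < k := i.isLt
          have hikr : (i : ℕ) < (List.replicate k (1 : A)).length := by simpa using hik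
          have hget : M.get ⟨(i : ℕ), hM.symm ▸ (by omega : (i : ℕ) < k + L.length)⟩ = 1 := by
            rw [List.get_eq_getElem]
            simp only [hMdef]
            rw [List.getElem_append_left hikr]
            simp
          rw [hget, h1]
          have hset : M.set (i : ℕ) 0 =
              (List.replicate k (1 : A)).set (i : ℕ) 0 ++ L := by
            rw [hMdef, List.set_append_left _ _ hikr]
          rw [hset]
          apply hZ ((List.replicate k (1 : A)).set (i : ℕ) 0 ++ L).length a _ rfl
          refine ⟨⟨(i : ℕ), by simp [hik, hlenL]; omega⟩, ?_⟩
          rw [List.get_eq_getElem, List.getElem_append_left (by simpa using hik)]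
          simp [List.getElem_set]
        rw [hfst, zero_add]
        apply Finset.sum_congr rfl
        intro i _
        simp only [Fin.cast, Fin.natAdd]
        have hiL : (i : ℕ) < L.length := i.isLt
        have hkle : (List.replicate k (1 : A)).length ≤ k + (i : ℕ) := by simp
        have hget : M.get ⟨k + (i : ℕ), hM.symm ▸ (by omega : k + (i : ℕ) < k + L.length)⟩ =
            L.get i := by
          rw [List.get_eq_getElem, List.get_eq_getElem]
          simp only [hMdef]
          rw [List.getElem_append_right hkle]
          simp
        rw [hget]
        have hset : M.set (k + (i : ℕ)) (bul (L.get i) c) =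
            List.replicate k (1 : A) ++ L.set (i : ℕ) (bul (L.get i) c) := by
          rw [hMdef, List.set_append_right _ _ hkle]
          simp
        rw [hset]
        exact ih (L.set (i : ℕ) (bul (L.get i) c)) (by simp [hlenL])
  intro l
  exact main l.length l rfl
end

section
/- Let V be a vector space and let A = T(V) be equipped with the deconcatenation coproduct Δ and a commutative associative product * admitting ∅ as unit, making (T(V),*,Δ) a bialgebra. Then V ∩ (A₊ * A₊) = (0), where A₊ is the augmentation ideal. -/
/-!
For a commutative bialgebra the Adams operations `Ψᵏ = id^{*k} = ∑ₛ (k choose s) ρ^{*s}` are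
multiplicative, where `ρ = id - η ∘ ε` is the projection onto the augmentation ideal `A₊`. On
`T(V)` with deconcatenation, `ρ^{*s}` kills each element for `s` large, so `k ↦ Ψᵏ x` is
polynomial in `k`; its linear coefficient `ψ x = log (1 + ρ) x` is extracted by Lagrange
interpolation at the nodes `k = 0, …, M`. For `a, b ∈ A₊` the polynomial `Ψᵏ (a * b)` is a
product of two polynomials without constant term, so `ψ (a * b) = 0`, whereas `Ψᵏ v = k • v`
for a primitive `v`, so `ψ v = v`.
-/

open TensorProduct Filter

namespace Polynomial

variable {K : Type*} [Field K]

variable (K) in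
noncomputable def binomialPoly (s : ℕ) : K[X] := C ((s.factorial : K)⁻¹) * descPochhammer K s

theorem binomialPoly_eval_natCast [CharZero K] (s k : ℕ) :
    (binomialPoly K s).eval (k : K) = k.choose s := by
  rw [binomialPoly, eval_mul, eval_C, Nat.cast_choose_eq_descPochhammer_div, div_eq_inv_mul]

theorem degree_binomialPoly_le (s : ℕ) : (binomialPoly K s).degree ≤ s :=
  (degree_mul_le _ _).trans <| by
    simpa using _root_.add_le_add (degree_C_le (a := ((s.factorial : K)⁻¹)))
      (degree_le_natDegree.trans_eq (by rw [descPochhammer_natDegree]))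

theorem X_dvd_binomialPoly {s : ℕ} (hs : s ≠ 0) : X ∣ binomialPoly K s := by
  obtain ⟨t, rfl⟩ := Nat.exists_eq_succ_of_ne_zero hs
  exact (Dvd.intro _ (descPochhammer_succ_left K t).symm).mul_left _

end Polynomial

namespace Lagrange

open Polynomial

variable {K : Type*} [Field K]

variable (K) in
noncomputable def coeffWeight (M n k : ℕ) : K :=
  (Lagrange.basis (Finset.range (M + 1)) (fun i : ℕ => (i : K)) k).coeff n

variable [CharZero K]

theorem coeff_eq_sum_eval_mul_coeffWeight {M : ℕ} {p : K[X]} (hp : p.degree ≤ M) (n : ℕ) :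
    p.coeff n = ∑ k ∈ Finset.range (M + 1), p.eval (k : K) * coeffWeight K M n k := by
  have hdeg : p.degree < (Finset.range (M + 1)).card := by
    rw [Finset.card_range]
    exact hp.trans_lt (by exact_mod_cast M.lt_succ_self)
  conv_lhs => rw [eq_interpolate Nat.cast_injective.injOn hdeg, interpolate_apply]
  simp only [finsetSum_coeff, coeff_C_mul, coeffWeight]

theorem sum_natCast_mul_coeffWeight_one {M : ℕ} (hM : 1 ≤ M) :
    ∑ k ∈ Finset.range (M + 1), (k : K) * coeffWeight K M 1 k = 1 := by
  simpa using (coeff_eq_sum_eval_mul_coeffWeight (p := (X : K[X]))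
    (by rw [degree_X]; exact_mod_cast hM) 1).symm

theorem sum_choose_mul_choose_mul_coeffWeight_one {M s t : ℕ} (hs : s ≠ 0) (ht : t ≠ 0)
    (hM : s + t ≤ M) :
    ∑ k ∈ Finset.range (M + 1), (k.choose s * k.choose t : K) * coeffWeight K M 1 k = 0 := by
  have hdeg : (binomialPoly K s * binomialPoly K t).degree ≤ M :=
    (degree_mul_le _ _).trans <| (_root_.add_le_add (degree_binomialPoly_le s)
      (degree_binomialPoly_le t)).trans (by exact_mod_cast hM)
  have hX2 : X ^ 2 ∣ binomialPoly K s * binomialPoly K t := by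
    rw [pow_two]
    exact mul_dvd_mul (X_dvd_binomialPoly hs) (X_dvd_binomialPoly ht)
  rw [← X_pow_dvd_iff.mp hX2 1 one_lt_two, coeff_eq_sum_eval_mul_coeffWeight hdeg]
  simp only [eval_mul, binomialPoly_eval_natCast]

end Lagrange

def Submodule.eventuallyKer {R M N ι : Type*} [Semiring R] [AddCommMonoid M] [Module R M]
    [AddCommMonoid N] [Module R N] (l : Filter ι) (f : ι → M →ₗ[R] N) : Submodule R M where
  carrier := {x | ∀ᶠ i in l, f i x = 0}
  add_mem' hx hy := (hx.and hy).mono fun i h => by rw [map_add, h.1, h.2, add_zero]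
  zero_mem' := Eventually.of_forall fun i => map_zero (f i)
  smul_mem' c _ hx := hx.mono fun i h => by rw [map_smul, h, smul_zero]

theorem Filter.eventually_atTop_of_eventually_succ {p : ℕ → Prop}
    (h : ∀ᶠ n in atTop, p (n + 1)) : ∀ᶠ n in atTop, p n := by
  rw [← map_add_atTop_eq_nat 1]
  exact h

theorem sum_range_succ_choose_smul {R M : Type*} [CommRing R] [AddCommGroup M] [Module R M]
    (x : ℕ → M) (k : ℕ) :
    ∑ s ∈ Finset.range (k + 2), ((k + 1).choose s : R) • x s =
      ∑ s ∈ Finset.range (k + 1), (k.choose s : R) • x s +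
        ∑ s ∈ Finset.range (k + 1), (k.choose s : R) • x (s + 1) := by
  rw [Finset.sum_range_succ' _ (k + 1), Finset.sum_range_succ' (fun s => (k.choose s : R) • x s)]
  simp only [Nat.choose_succ_succ', Nat.cast_add, add_smul, Finset.sum_add_distrib,
    Nat.choose_zero_right]
  rw [Finset.sum_range_succ (fun s => (k.choose (s + 1) : R) • x (s + 1)), Nat.choose_succ_self,
    Nat.cast_zero, zero_smul, add_zero]
  abel

/-- A commutative bialgebra structure on the module `A`, without coassociativity, whose product is
a bilinear map so that it may differ from a multiplication `A` already carries. -/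
structure CommBialgebraData (R A : Type*) [CommRing R] [AddCommGroup A] [Module R A] [One A] where
  mul : A →ₗ[R] A →ₗ[R] A
  comul : A →ₗ[R] A ⊗[R] A
  counit : A →ₗ[R] R
  mul_comm : ∀ a b, mul a b = mul b a
  mul_assoc : ∀ a b c, mul (mul a b) c = mul a (mul b c)
  one_mul : ∀ a, mul 1 a = a
  comul_one : comul 1 = 1 ⊗ₜ 1
  counit_one : counit 1 = 1
  rTensor_counit_comul : ∀ a, counit.rTensor A (comul a) = 1 ⊗ₜ a
  lTensor_counit_comul : ∀ a, counit.lTensor A (comul a) = a ⊗ₜ 1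
  comul_mul : ∀ a b, comul (mul a b) = map (lift mul) (lift mul)
    (tensorTensorTensorComm R A A A A (comul a ⊗ₜ comul b))
  counit_mul : ∀ a b, counit (mul a b) = counit a * counit b

namespace CommBialgebraData

variable {R A : Type*} [CommRing R] [AddCommGroup A] [Module R A] [One A]
  (S : CommBialgebraData R A)

theorem mul_one (a : A) : S.mul a 1 = a := by rw [S.mul_comm, S.one_mul]

theorem mul_mul_mul_comm (a b c d : A) :
    S.mul (S.mul a b) (S.mul c d) = S.mul (S.mul a c) (S.mul b d) := by
  rw [S.mul_assoc, ← S.mul_assoc b, S.mul_comm b c, S.mul_assoc c, ← S.mul_assoc]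

noncomputable def conv : (A →ₗ[R] A) →ₗ[R] (A →ₗ[R] A) →ₗ[R] A →ₗ[R] A :=
  (mapBilinear (RingHom.id R) A A A A).compr₂
    (LinearMap.lcomp R A S.comul ∘ₗ LinearMap.llcomp R (A ⊗[R] A) (A ⊗[R] A) A (lift S.mul))

theorem conv_apply (f g : A →ₗ[R] A) (a : A) :
    S.conv f g a = lift S.mul (map f g (S.comul a)) := rfl

noncomputable def convOne : A →ₗ[R] A := S.counit.smulRight 1

@[simp] theorem convOne_apply (a : A) : S.convOne a = S.counit a • 1 := rfl

theorem convOne_conv (f : A →ₗ[R] A) : S.conv S.convOne f = f := by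
  have h : lift S.mul ∘ₗ map S.convOne f =
      f ∘ₗ (TensorProduct.lid R A).toLinearMap ∘ₗ S.counit.rTensor A := by
    ext a b
    simp [S.one_mul]
  ext a
  rw [conv_apply, ← LinearMap.comp_apply (lift S.mul), h]
  simp [S.rTensor_counit_comul]

theorem conv_convOne (f : A →ₗ[R] A) : S.conv f S.convOne = f := by
  have h : lift S.mul ∘ₗ map f S.convOne =
      f ∘ₗ (TensorProduct.rid R A).toLinearMap ∘ₗ S.counit.lTensor A := by
    ext a b
    simp [S.mul_one]
  ext a
  rw [conv_apply, ← LinearMap.comp_apply (lift S.mul), h]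
  simp [S.lTensor_counit_comul]

noncomputable def augProj : A →ₗ[R] A := LinearMap.id - S.convOne

/-- Convolution powers of `augProj`, nested to the left since convolution is not known to be
associative. -/
noncomputable def augPow : ℕ → A →ₗ[R] A
  | 0 => S.convOne
  | n + 1 => S.conv S.augProj (augPow n)

theorem augProj_apply (a : A) : S.augProj a = a - S.counit a • 1 := rfl

theorem augProj_one : S.augProj 1 = 0 := by
  rw [augProj_apply, S.counit_one, one_smul, sub_self]

theorem augPow_zero_apply (a : A) : S.augPow 0 a = S.counit a • 1 := rfl

theorem augPow_one : S.augPow 1 = S.augProj := S.conv_convOne _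

theorem augPow_succ_apply (n : ℕ) (a : A) :
    S.augPow (n + 1) a = lift S.mul (map S.augProj (S.augPow n) (S.comul a)) := rfl

theorem augPow_succ_one (n : ℕ) : S.augPow (n + 1) 1 = 0 := by
  rw [augPow_succ_apply, S.comul_one, map_tmul, augProj_one, zero_tmul, map_zero]

theorem augPow_succ_apply_eq_zero {n : ℕ} {a : A}
    (h : (S.augPow n).lTensor A (S.comul a) = 0) : S.augPow (n + 1) a = 0 := by
  rw [augPow_succ_apply, ← LinearMap.rTensor_comp_lTensor, LinearMap.comp_apply, h, map_zero,
    map_zero]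

noncomputable def adams : ℕ → A →ₗ[R] A
  | 0 => S.convOne
  | k + 1 => S.conv LinearMap.id (adams k)

theorem adams_eq_sum (k : ℕ) :
    S.adams k = ∑ s ∈ Finset.range (k + 1), (k.choose s : R) • S.augPow s := by
  induction k with
  | zero => simp [adams, augPow]
  | succ k ih =>
    have hid : (LinearMap.id : A →ₗ[R] A) = S.convOne + S.augProj := by simp [augProj]
    rw [adams, hid, map_add, LinearMap.add_apply, convOne_conv, ih, map_sum,
      sum_range_succ_choose_smul]
    simp only [map_smul]
    rfl

theorem adams_apply_eq_sum_of_augPow_eq_zero {a : A} {B : ℕ} (h : ∀ s ≥ B, S.augPow s a = 0)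
    (k : ℕ) : S.adams k a = ∑ s ∈ Finset.range B, (k.choose s : R) • S.augPow s a := by
  rw [adams_eq_sum, LinearMap.sum_apply]
  simp only [LinearMap.smul_apply]
  calc _ = ∑ s ∈ Finset.range (max (k + 1) B), (k.choose s : R) • S.augPow s a :=
        Finset.sum_subset (Finset.range_subset_range.2 (le_max_left _ _)) fun s _ hs => by
          rw [Nat.choose_eq_zero_of_lt (by simpa using hs), Nat.cast_zero, zero_smul]
    _ = _ := (Finset.sum_subset (Finset.range_subset_range.2 (le_max_right _ _)) fun s _ hs => by
          rw [h s (by simpa using hs), smul_zero]).symm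

theorem conv_apply_mul {f g : A →ₗ[R] A} (hf : ∀ a b, f (S.mul a b) = S.mul (f a) (f b))
    (hg : ∀ a b, g (S.mul a b) = S.mul (g a) (g b)) (a b : A) :
    S.conv f g (S.mul a b) = S.mul (S.conv f g a) (S.conv f g b) := by
  have h : lift S.mul ∘ₗ map f g ∘ₗ map (lift S.mul) (lift S.mul) ∘ₗ
      (tensorTensorTensorComm R A A A A).toLinearMap =
      lift S.mul ∘ₗ map (lift S.mul ∘ₗ map f g) (lift S.mul ∘ₗ map f g) := by
    refine TensorProduct.ext_fourfold' fun w x y z => ?_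
    simp [hf, hg, S.mul_mul_mul_comm]
  simpa [conv_apply, S.comul_mul] using congr($h (S.comul a ⊗ₜ S.comul b))

theorem adams_apply_mul (k : ℕ) (a b : A) :
    S.adams k (S.mul a b) = S.mul (S.adams k a) (S.adams k b) := by
  induction k generalizing a b with
  | zero => simp [adams, S.counit_mul, mul_smul, S.one_mul, smul_comm (S.counit a)]
  | succ k ih => exact S.conv_apply_mul (f := LinearMap.id) (fun _ _ => rfl) ih a b

theorem counit_eq_zero_of_comul_eq {x : A} (hx : S.comul x = 1 ⊗ₜ x + x ⊗ₜ 1) :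
    S.counit x = 0 := by
  have h := congr(TensorProduct.rid R A $(S.lTensor_counit_comul x))
  rw [hx, map_add, LinearMap.lTensor_tmul, LinearMap.lTensor_tmul, map_add, rid_tmul, rid_tmul,
    rid_tmul, S.counit_one, one_smul, add_eq_right] at h
  simpa [S.counit_one] using congr(S.counit $h)

theorem adams_apply_of_comul_eq {x : A} (hx : S.comul x = 1 ⊗ₜ x + x ⊗ₜ 1) (k : ℕ) :
    S.adams k x = (k : R) • x := by
  have hε : S.counit x = 0 := S.counit_eq_zero_of_comul_eq hx
  have hρ : S.augProj x = x := by rw [augProj_apply, hε, zero_smul, sub_zero]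
  have hnil : ∀ s ≥ 2, S.augPow s x = 0 := by
    rintro s hs
    obtain ⟨n, rfl⟩ := Nat.exists_eq_add_of_le' hs
    rw [augPow_succ_apply, hx, map_add, map_tmul, map_tmul, augProj_one, augPow_succ_one]
    simp
  rw [S.adams_apply_eq_sum_of_augPow_eq_zero hnil, Finset.sum_range_succ, Finset.sum_range_one,
    augPow_zero_apply, hε, zero_smul, smul_zero, zero_add, augPow_one, hρ, Nat.choose_one_right]

section Eulerian

variable {K : Type*} [Field K] [CharZero K] [Module K A] (S : CommBialgebraData K A)

/-- On an `x` with `augPow s x = 0` for `s > M` this is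
`log (1 + ρ) x = ∑ₛ (-1)^(s+1)/s • ρ^{*s} x`: the weights extract the linear coefficient of the
polynomial `k ↦ adams k x`. -/
noncomputable def eulerian (M : ℕ) : A →ₗ[K] A :=
  ∑ k ∈ Finset.range (M + 1), Lagrange.coeffWeight K M 1 k • S.adams k

theorem eulerian_apply_of_comul_eq {x : A} (hx : S.comul x = 1 ⊗ₜ x + x ⊗ₜ 1) {M : ℕ}
    (hM : 1 ≤ M) : S.eulerian M x = x := by
  simp only [eulerian, LinearMap.sum_apply, LinearMap.smul_apply, S.adams_apply_of_comul_eq hx,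
    smul_smul, ← Finset.sum_smul]
  simp_rw [_root_.mul_comm (Lagrange.coeffWeight K M 1 _)]
  rw [Lagrange.sum_natCast_mul_coeffWeight_one hM, one_smul]

theorem eulerian_mul_eq_zero {a b : A} (ha : S.counit a = 0) (hb : S.counit b = 0) {Ba Bb : ℕ}
    (hBa : ∀ s ≥ Ba, S.augPow s a = 0) (hBb : ∀ t ≥ Bb, S.augPow t b = 0) {M : ℕ}
    (hM : Ba + Bb ≤ M) : S.eulerian M (S.mul a b) = 0 := by
  have hexpand : ∀ k, S.adams k (S.mul a b) =
      ∑ t ∈ Finset.range Bb, ∑ s ∈ Finset.range Ba,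
      ((k.choose t * k.choose s : K)) • S.mul (S.augPow s a) (S.augPow t b) := fun k => by
    simp only [adams_apply_mul, S.adams_apply_eq_sum_of_augPow_eq_zero hBa,
      S.adams_apply_eq_sum_of_augPow_eq_zero hBb, map_sum, map_smul, LinearMap.sum_apply,
      LinearMap.smul_apply, Finset.smul_sum, smul_smul]
  simp only [eulerian, LinearMap.sum_apply, LinearMap.smul_apply, hexpand, Finset.smul_sum,
    smul_smul]
  rw [Finset.sum_comm]
  refine Finset.sum_eq_zero fun t ht => ?_
  rw [Finset.sum_comm]
  refine Finset.sum_eq_zero fun s hs => ?_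
  rcases Nat.eq_zero_or_pos s with rfl | hs0
  · simp [augPow_zero_apply, ha]
  rcases Nat.eq_zero_or_pos t with rfl | ht0
  · simp [augPow_zero_apply, hb]
  simp only [Finset.mem_range] at hs ht
  simp_rw [_root_.mul_comm (Lagrange.coeffWeight K M 1 _)]
  rw [← Finset.sum_smul,
    Lagrange.sum_choose_mul_choose_mul_coeffWeight_one ht0.ne' hs0.ne' (by omega), zero_smul]

theorem eq_zero_of_comul_eq_of_mem_span (hnil : ∀ a, ∀ᶠ s in atTop, S.augPow s a = 0) {x : A}
    (hx : S.comul x = 1 ⊗ₜ x + x ⊗ₜ 1)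
    (hmem : x ∈ Submodule.span K (Set.image2 (fun p q => S.mul p q)
      (LinearMap.ker S.counit : Set A) (LinearMap.ker S.counit : Set A))) : x = 0 := by
  have hspan : Submodule.span K (Set.image2 (fun p q => S.mul p q)
      (LinearMap.ker S.counit : Set A) (LinearMap.ker S.counit : Set A)) ≤
      Submodule.eventuallyKer atTop S.eulerian := by
    rw [Submodule.span_le]
    rintro _ ⟨a, ha, b, hb, rfl⟩
    obtain ⟨Ba, hBa⟩ := eventually_atTop.1 (hnil a)
    obtain ⟨Bb, hBb⟩ := eventually_atTop.1 (hnil b)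
    exact eventually_atTop.2 ⟨Ba + Bb, fun M hM => S.eulerian_mul_eq_zero ha hb hBa hBb hM⟩
  obtain ⟨M, hM0, hM1⟩ := ((hspan hmem).and (eventually_ge_atTop 1)).exists
  rw [← S.eulerian_apply_of_comul_eq hx hM1]
  exact hM0

end Eulerian

end CommBialgebraData

namespace TensorAlgebra

variable {R V : Type*} [CommRing R] [AddCommGroup V] [Module R V]

theorem submodule_eq_top_of_ι_mul_mem (P : Submodule R (TensorAlgebra R V)) (h1 : 1 ∈ P)
    (hι : ∀ v, ∀ u ∈ P, ι R v * u ∈ P) : P = ⊤ := by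
  have hmul : ∀ a : TensorAlgebra R V, ∀ u ∈ P, a * u ∈ P := by
    intro a
    induction a using TensorAlgebra.induction with
    | algebraMap r => exact fun u hu => by simpa [Algebra.smul_def] using P.smul_mem r hu
    | ι v => exact hι v
    | mul a b ha hb => exact fun u hu => by rw [mul_assoc]; exact ha _ (hb u hu)
    | add a b ha hb => exact fun u hu => by rw [add_mul]; exact P.add_mem (ha u hu) (hb u hu)
  exact eq_top_iff.2 fun a _ => by simpa using hmul a 1 h1

variable {Δ : TensorAlgebra R V →ₗ[R] TensorAlgebra R V ⊗[R] TensorAlgebra R V}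
  {ε : TensorAlgebra R V →ₗ[R] R}

theorem comul_ι_of_ι_mul (hΔone : Δ 1 = 1 ⊗ₜ[R] 1)
    (hΔ : ∀ v u, Δ (ι R v * u) = 1 ⊗ₜ (ι R v * u) +
      (LinearMap.mulLeft R (ι R v)).rTensor (TensorAlgebra R V) (Δ u))
    (v : V) : Δ (ι R v) = 1 ⊗ₜ ι R v + ι R v ⊗ₜ 1 := by
  simpa [hΔone] using hΔ v 1

theorem rTensor_counit_comul_of_ι_mul (hΔone : Δ 1 = 1 ⊗ₜ[R] 1)
    (hΔ : ∀ v u, Δ (ι R v * u) = 1 ⊗ₜ (ι R v * u) +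
      (LinearMap.mulLeft R (ι R v)).rTensor (TensorAlgebra R V) (Δ u))
    (hεone : ε 1 = 1) (hε : ∀ v u, ε (ι R v * u) = 0) (a : TensorAlgebra R V) :
    ε.rTensor (TensorAlgebra R V) (Δ a) = 1 ⊗ₜ a := by
  have hει : ∀ v, ε ∘ₗ LinearMap.mulLeft R (ι R v) = 0 :=
    fun v => LinearMap.ext (hε v)
  have htop := submodule_eq_top_of_ι_mul_mem
    (LinearMap.eqLocus (ε.rTensor _ ∘ₗ Δ) (TensorProduct.mk R R _ 1))
    (by simp [hΔone, hεone])
    fun v u _ => by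
      change ε.rTensor _ (Δ (ι R v * u)) = 1 ⊗ₜ (ι R v * u)
      rw [hΔ, map_add, LinearMap.rTensor_tmul, hεone, ← LinearMap.comp_apply (ε.rTensor _),
        ← LinearMap.rTensor_comp, hει v, LinearMap.rTensor_zero, LinearMap.zero_apply, add_zero]
  exact (htop ▸ Submodule.mem_top : a ∈ LinearMap.eqLocus _ _)

theorem lTensor_counit_comul_of_ι_mul (hΔone : Δ 1 = 1 ⊗ₜ[R] 1)
    (hΔ : ∀ v u, Δ (ι R v * u) = 1 ⊗ₜ (ι R v * u) +
      (LinearMap.mulLeft R (ι R v)).rTensor (TensorAlgebra R V) (Δ u))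
    (hεone : ε 1 = 1) (hε : ∀ v u, ε (ι R v * u) = 0) (a : TensorAlgebra R V) :
    ε.lTensor (TensorAlgebra R V) (Δ a) = a ⊗ₜ 1 := by
  have htop := submodule_eq_top_of_ι_mul_mem
    (LinearMap.eqLocus (ε.lTensor _ ∘ₗ Δ) ((TensorProduct.mk R _ R).flip 1))
    (by simp [hΔone, hεone])
    fun v u hu => by
      have hu : ε.lTensor _ (Δ u) = u ⊗ₜ 1 := hu
      change ε.lTensor _ (Δ (ι R v * u)) = (ι R v * u) ⊗ₜ 1
      rw [hΔ, map_add, LinearMap.lTensor_tmul, hε, tmul_zero, zero_add,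
        ← LinearMap.comp_apply (ε.lTensor _), LinearMap.lTensor_comp_rTensor,
        ← LinearMap.rTensor_comp_lTensor, LinearMap.comp_apply, hu, LinearMap.rTensor_tmul,
        LinearMap.mulLeft_apply]
  exact (htop ▸ Submodule.mem_top : a ∈ LinearMap.eqLocus _ _)

theorem eventually_lTensor_augPow_comul_eq_zero (S : CommBialgebraData R (TensorAlgebra R V))
    (hΔ : ∀ v u, S.comul (ι R v * u) = 1 ⊗ₜ (ι R v * u) +
      (LinearMap.mulLeft R (ι R v)).rTensor (TensorAlgebra R V) (S.comul u))
    (hε : ∀ v u, S.counit (ι R v * u) = 0) (a : TensorAlgebra R V) :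
    ∀ᶠ s in atTop, (S.augPow s).lTensor _ (S.comul a) = 0 := by
  have hρ : ∀ v, S.augProj ∘ₗ LinearMap.mulLeft R (ι R v) =
      LinearMap.mulLeft R (ι R v) :=
    fun v => LinearMap.ext fun w => by simp [S.augProj_apply, hε]
  have hstep : ∀ v u t, (S.augPow t).lTensor _ (S.comul u) = 0 →
      S.augPow (t + 1) (ι R v * u) = 0 := fun v u t h => by
    rw [S.augPow_succ_apply, hΔ, map_add, map_tmul, S.augProj_one, zero_tmul, zero_add,
      LinearMap.map_rTensor, hρ, ← LinearMap.rTensor_comp_lTensor, LinearMap.comp_apply, h,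
      map_zero, map_zero]
  have htop :
      Submodule.eventuallyKer atTop (fun s => (S.augPow s).lTensor _ ∘ₗ S.comul) = ⊤ := by
    refine submodule_eq_top_of_ι_mul_mem _ ?_ fun v u hu => ?_
    · exact eventually_atTop_of_eventually_succ <| Eventually.of_forall fun n => by
        simp [S.comul_one, S.augPow_succ_one]
    · have hu : ∀ᶠ s in atTop, (S.augPow s).lTensor _ (S.comul u) = 0 := hu
      have hvu : ∀ᶠ s in atTop, S.augPow s (ι R v * u) = 0 :=
        eventually_atTop_of_eventually_succ (hu.mono (hstep v u))
      refine (hu.and hvu).mono fun s ⟨hus, hvus⟩ => ?_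
      change (S.augPow s).lTensor _ (S.comul (ι R v * u)) = 0
      rw [hΔ, map_add, LinearMap.lTensor_tmul, hvus, tmul_zero, zero_add,
        ← LinearMap.comp_apply (LinearMap.lTensor _ _), LinearMap.lTensor_comp_rTensor,
        ← LinearMap.rTensor_comp_lTensor, LinearMap.comp_apply, hus, map_zero]
  exact (htop ▸ Submodule.mem_top :
    a ∈ Submodule.eventuallyKer atTop (fun s => (S.augPow s).lTensor _ ∘ₗ S.comul))

theorem eventually_augPow_eq_zero (S : CommBialgebraData R (TensorAlgebra R V))
    (hΔ : ∀ v u, S.comul (ι R v * u) = 1 ⊗ₜ (ι R v * u) +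
      (LinearMap.mulLeft R (ι R v)).rTensor (TensorAlgebra R V) (S.comul u))
    (hε : ∀ v u, S.counit (ι R v * u) = 0) (a : TensorAlgebra R V) :
    ∀ᶠ s in atTop, S.augPow s a = 0 :=
  eventually_atTop_of_eventually_succ <|
    (eventually_lTensor_augPow_comul_eq_zero S hΔ hε a).mono fun _ => S.augPow_succ_apply_eq_zero

end TensorAlgebra

/-- If `T(V)`, equipped with the deconcatenation coproduct `Δ`, carries a
commutative associative product `*` with unit the empty word making it a
bialgebra, then `V ∩ (A₊ * A₊) = (0)` where `A₊` is the augmentation ideal. -/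
theorem primitive_inter_square_eq_bot {K V : Type*} [Field K] [CharZero K]
    [AddCommGroup V] [Module K V]
    (Δ : TensorAlgebra K V →ₗ[K] TensorAlgebra K V ⊗[K] TensorAlgebra K V)
    (hΔone : Δ 1 = 1 ⊗ₜ[K] 1)
    (hΔcons : ∀ (v : V) (u : TensorAlgebra K V),
      Δ (TensorAlgebra.ι K v * u) =
        1 ⊗ₜ[K] (TensorAlgebra.ι K v * u)
        + TensorProduct.map (LinearMap.mulLeft K (TensorAlgebra.ι K v))
            LinearMap.id (Δ u))
    (ε : TensorAlgebra K V →ₗ[K] K)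
    (hεone : ε 1 = 1)
    (hεcons : ∀ (v : V) (u : TensorAlgebra K V), ε (TensorAlgebra.ι K v * u) = 0)
    (star : TensorAlgebra K V →ₗ[K] TensorAlgebra K V →ₗ[K] TensorAlgebra K V)
    (hcomm : ∀ u v : TensorAlgebra K V, star u v = star v u)
    (hassoc : ∀ u v w : TensorAlgebra K V, star (star u v) w = star u (star v w))
    (hone : ∀ u : TensorAlgebra K V, star 1 u = u)
    (hΔstar : ∀ u v : TensorAlgebra K V, Δ (star u v) =
      TensorProduct.map (TensorProduct.lift star) (TensorProduct.lift star)
        (TensorProduct.tensorTensorTensorComm K (TensorAlgebra K V)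
          (TensorAlgebra K V) (TensorAlgebra K V) (TensorAlgebra K V)
          (Δ u ⊗ₜ[K] Δ v)))
    (hεstar : ∀ u v : TensorAlgebra K V, ε (star u v) = ε u * ε v) :
    LinearMap.range (TensorAlgebra.ι K (M := V)) ⊓
      Submodule.span K
        (Set.image2 (fun p q => star p q)
          (↑(LinearMap.ker ε) : Set (TensorAlgebra K V))
          (↑(LinearMap.ker ε) : Set (TensorAlgebra K V))) = ⊥ := by
  let S : CommBialgebraData K (TensorAlgebra K V) :=
    { mul := star, comul := Δ, counit := ε
      mul_comm := hcomm, mul_assoc := hassoc, one_mul := hone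
      comul_one := hΔone, counit_one := hεone
      rTensor_counit_comul := TensorAlgebra.rTensor_counit_comul_of_ι_mul hΔone hΔcons hεone hεcons
      lTensor_counit_comul := TensorAlgebra.lTensor_counit_comul_of_ι_mul hΔone hΔcons hεone hεcons
      comul_mul := hΔstar, counit_mul := hεstar }
  rw [eq_bot_iff]
  rintro _ ⟨⟨v, rfl⟩, hv⟩
  exact (Submodule.mem_bot K).2 <| S.eq_zero_of_comul_eq_of_mem_span
    (TensorAlgebra.eventually_augPow_eq_zero S hΔcons hεcons)
    (TensorAlgebra.comul_ι_of_ι_mul hΔone hΔcons v) hv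
end
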